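/- arXiv:1907.04370 — 6 statements merged into one kernel-verified Lean document; each statement's English description precedes it below -/
import Mathlib

section
/- Fix ρ ∈ (0,1] and set ω := 0, h₀ := 1/(1+√ρ), and let c₀ ∈ ℝ satisfy c₀² = (1−ρ)/(1+√ρ)². Then for every ε ∈ ℝ one has P(h₀ + ε, h₀, c₀) = 0 and S(h₀ + ε, h₀, c₀) = 0. In particular, for each ε the triple (h, h₊, c) = (h₀ + ε, h₀, c₀) is an exact solution of the conjugate flow equations: the downstream depth and Froude number of the family of irrotational conjugate flows are constant in ε. -/
open Real Set

/-- The first conjugate-flow polynomial `P(h, h₊, c)` (with parameters ρ, ω). -/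
noncomputable def Pfun (ρ ω h hp c : ℝ) : ℝ :=
  ω ^ 2 * hp ^ 2 * (hp - h) * (2 - hp - h) ^ 2 * ρ
    + 4 * hp ^ 2 * (2 * hp ^ 2 - c ^ 2 * hp - 4 * hp - c ^ 2 * h + 2 * c ^ 2 + 2) * ρ
    + 4 * c * ω * (1 - h) * hp ^ 2 * (2 - hp - h) * ρ
    - 4 * (1 - hp) ^ 2 * (2 * hp ^ 2 - c ^ 2 * hp - c ^ 2 * h)

/-- The flow-force conjugate-flow polynomial `S(h, h₊, c)` (with parameters ρ, ω). -/
noncomputable def Sfun (ρ ω h hp c : ℝ) : ℝ :=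
  ω ^ 2 * hp * (hp - h) * (hp + 3 * h - 4) * ρ
    + 12 * hp * (hp - c ^ 2 - 1) * ρ
    + 12 * c * ω * (h - 1) * hp * ρ
    - 12 * (hp - 1) * (hp - c ^ 2)

/-!
For `ω = 0` the polynomial `S` does not involve `h` at all, and `h` enters `P` only through
the term `4 c² h ((1 - h₊)² - ρ h₊²)`. So any `h₊` with `ρ h₊² = (1 - h₊)²` makes both
polynomials independent of `h`, and the remaining constraint is `c² = 2 h₊ - 1`.
For `ρ ≥ 0` the balance equation is solved by `h₊ = 1/(1 + √ρ)`, since then `1 - h₊ = √ρ h₊`,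
and `c₀² = (1 - ρ) h₊² = (1 - √ρ) h₊ = 2 h₊ - 1`.
-/

theorem Pfun_irrotational_eq_zero {ρ h hp c : ℝ} (hbal : ρ * hp ^ 2 = (1 - hp) ^ 2)
    (hc : c ^ 2 = 2 * hp - 1) : Pfun ρ 0 h hp c = 0 := by
  unfold Pfun
  linear_combination
    4 * (2 * hp ^ 2 - c ^ 2 * hp - 4 * hp - c ^ 2 * h + 2 * c ^ 2 + 2) * hbal
      + 8 * (1 - hp) ^ 2 * hc

theorem Sfun_irrotational_eq_zero {ρ h hp c : ℝ} (hbal : ρ * hp ^ 2 = (1 - hp) ^ 2)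
    (hc : c ^ 2 = 2 * hp - 1) : Sfun ρ 0 h hp c = 0 := by
  unfold Sfun
  linear_combination -12 * hbal + (12 * (hp - 1) - 12 * hp * ρ) * hc

theorem mul_sq_one_div_one_add_sqrt {ρ : ℝ} (hρ : 0 ≤ ρ) :
    ρ * (1 / (1 + √ρ)) ^ 2 = (1 - 1 / (1 + √ρ)) ^ 2 := by
  field_simp
  linear_combination -sq_sqrt hρ

theorem one_sub_div_sq_one_add_sqrt {ρ : ℝ} (hρ : 0 ≤ ρ) :
    (1 - ρ) / (1 + √ρ) ^ 2 = 2 * (1 / (1 + √ρ)) - 1 := by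
  field_simp
  linear_combination sq_sqrt hρ

/-- The family of irrotational conjugate flows has constant downstream depth and
Froude number: with ω = 0, h₀ = 1/(1+√ρ) and c₀² = (1−ρ)/(1+√ρ)², the triple
(h₀ + ε, h₀, c₀) solves the conjugate flow equations for every ε. -/
theorem irrotational_conjugate_flows_exact (ρ c₀ : ℝ) (hρ : ρ ∈ Ioc (0 : ℝ) 1)
    (hc₀ : c₀ ^ 2 = (1 - ρ) / (1 + Real.sqrt ρ) ^ 2) :
    ∀ ε : ℝ,
      Pfun ρ 0 (1 / (1 + Real.sqrt ρ) + ε) (1 / (1 + Real.sqrt ρ)) c₀ = 0 ∧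
      Sfun ρ 0 (1 / (1 + Real.sqrt ρ) + ε) (1 / (1 + Real.sqrt ρ)) c₀ = 0 := by
  intro ε
  have hbal := mul_sq_one_div_one_add_sqrt hρ.1.le
  have hc := hc₀.trans (one_sub_div_sq_one_add_sqrt hρ.1.le)
  exact ⟨Pfun_irrotational_eq_zero hbal hc, Sfun_irrotational_eq_zero hbal hc⟩
end

section
/- Fix ρ := 1 and let ω ∈ ℝ be arbitrary. Set h₀ := 2/3 and c₀ := −2ω/9. Then for every ε ∈ ℝ one has P(2/3 + ε, 2/3 − ε, c₀ + ωε/3) = 0 and S(2/3 + ε, 2/3 − ε, c₀ + ωε/3) = 0. In particular, for each ε the triple (h, h₊, c) = (2/3 + ε, 2/3 − ε, −2ω/9 + ωε/3) is an exact solution of the conjugate flow equations for homogeneous-density flow. -/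
open Real Set

/-! For ρ = 1 both polynomials vanish identically on the line `h + h₊ = 4/3`, `3c = -ω h₊`;
the family in the theorem is this line parametrised by `h = 2/3 + ε`. -/

theorem Pfun_one_eq_zero_of_add_eq (ω h hp c : ℝ) (hsum : h + hp = 4 / 3)
    (hc : 3 * c = -ω * hp) : Pfun 1 ω h hp c = 0 := by
  obtain rfl : h = 4 / 3 - hp := by linarith
  obtain rfl : c = -ω * hp / 3 := by linarith
  unfold Pfun
  ring

theorem Sfun_one_eq_zero_of_add_eq (ω h hp c : ℝ) (hsum : h + hp = 4 / 3)
    (hc : 3 * c = -ω * hp) : Sfun 1 ω h hp c = 0 := by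
  obtain rfl : h = 4 / 3 - hp := by linarith
  obtain rfl : c = -ω * hp / 3 := by linarith
  unfold Sfun
  ring

/-- For homogeneous density (ρ = 1) and arbitrary constant vorticity ω, the triple
(2/3 + ε, 2/3 − ε, −2ω/9 + ωε/3) is an exact solution of the conjugate flow
equations for every ε. -/
theorem homogeneous_conjugate_flows_exact (ω : ℝ) :
    ∀ ε : ℝ,
      Pfun 1 ω (2 / 3 + ε) (2 / 3 - ε) (-2 * ω / 9 + ω * ε / 3) = 0 ∧
      Sfun 1 ω (2 / 3 + ε) (2 / 3 - ε) (-2 * ω / 9 + ω * ε / 3) = 0 := fun _ =>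
  ⟨Pfun_one_eq_zero_of_add_eq _ _ _ _ (by ring) (by ring),
    Sfun_one_eq_zero_of_add_eq _ _ _ _ (by ring) (by ring)⟩
end

section
/- Set ρ := 25/52, ω := −9/10, h₀ := 2/3, c₀ := 1/2. Then: (i) P(h₀, h₀, c₀) = 0 and S̃(h₀, h₀, c₀) = 0; (ii) det D_{(h,h₊)}𝒫(h₀, h₀, c₀) ≠ 0 and det[(∂_h𝒫 + ∂_{h₊}𝒫)(h₀,h₀,c₀), ∂_c𝒫(h₀,h₀,c₀)] ≠ 0; (iii) h₀³(1−ρ) + 4c₀²(1−h₀) > c₀²h₀; (iv) c₀(c₀ + (1−h₀)ω) > 0 (no critical layer); and (v) the unique pair (a,b) ∈ ℝ² solving the linear system ∂_{h₊}𝒫(h₀,h₀,c₀)·a + ∂_c𝒫(h₀,h₀,c₀)·b = −∂_h𝒫(h₀,h₀,c₀) is (a,b) = (−179/725, −6/29); consequently any differentiable conjugate-flow family (h₀+ε, h₊(ε), c(ε)) through this point satisfies h₊'(0) = −179/725 and c'(0) = −6/29. -/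
open Real Set Filter

noncomputable def St0 (h hp c : ℝ) : ℝ :=
  (-12) * c ^ 2
    + (162/13) * hp
    + (135/13) * hp * c
    + (162/13) * hp * c ^ 2
    + (-1539/52) * hp ^ 2
    + (-135/26) * hp ^ 2 * c
    + (-81/13) * hp ^ 2 * c ^ 2
    + (891/52) * hp ^ 3
    + (-243/208) * hp ^ 4
    + 24 * h * c ^ 2
    + (-243/26) * h * hp
    + (-270/13) * h * hp * c
    + (-162/13) * h * hp * c ^ 2
    + (1701/104) * h * hp ^ 2
    + (135/26) * h * hp ^ 2 * c
    + (-243/104) * h * hp ^ 3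
    + (-567/104) * h ^ 2 * hp
    + (135/13) * h ^ 2 * hp * c
    + (-81/208) * h ^ 2 * hp ^ 2
    + (243/104) * h ^ 3 * hp

noncomputable def APf (h hp c : ℝ) : ℝ :=
  4 * c ^ 2
    + (-8) * hp * c ^ 2
    + (-9/13) * hp ^ 2
    + (105/26) * hp ^ 2 * c
    + (27/13) * hp ^ 2 * c ^ 2
    + (-27/104) * hp ^ 3
    + (-45/26) * hp ^ 3 * c
    + (81/208) * hp ^ 4
    + (135/104) * h * hp ^ 2
    + (-45/26) * h * hp ^ 2 * c
    + (-81/208) * h * hp ^ 3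
    + (-81/208) * h ^ 2 * hp ^ 2

noncomputable def BPf (hp c : ℝ) : ℝ :=
  (-4/13)
    + (-10/39) * c
    + (-88/39) * c ^ 2
    + (-6/13) * hp
    + (-5/13) * hp * c
    + (-18/13) * hp * c ^ 2
    + (81/13) * hp ^ 2
    + (15/26) * hp ^ 2 * c
    + (27/13) * hp ^ 2 * c ^ 2
    + (-135/26) * hp ^ 3
    + (81/208) * hp ^ 4

noncomputable def CPf (c : ℝ) : ℝ :=
  (16/39)
    + (136/117) * c

noncomputable def ASf (h hp c : ℝ) : ℝ :=
  24 * c ^ 2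
    + (-621/52) * hp
    + (-180/13) * hp * c
    + (-162/13) * hp * c ^ 2
    + (837/52) * hp ^ 2
    + (135/26) * hp ^ 2 * c
    + (-243/104) * hp ^ 3
    + (-405/104) * h * hp
    + (135/13) * h * hp * c
    + (-81/208) * h * hp ^ 2
    + (243/104) * h ^ 2 * hp

noncomputable def BSf (hp c : ℝ) : ℝ :=
  (-3/2)
    + (-9) * hp
    + (-45/26) * hp * c
    + (-81/13) * hp * c ^ 2
    + (1539/104) * hp ^ 2
    + (-243/208) * hp ^ 3

noncomputable def CSf (c : ℝ) : ℝ :=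
  2
    + 4 * c

noncomputable def ac0 (h hp c : ℝ) : ℝ :=
  8 * h * hp * c ^ 2
    + (-8) * h ^ 2 * c ^ 2
    + (-54/13) * h ^ 2 * hp
    + (-45/13) * h ^ 2 * hp * c
    + (-158/13) * h ^ 2 * hp * c ^ 2
    + (54/13) * h ^ 3
    + (45/13) * h ^ 3 * c
    + (158/13) * h ^ 3 * c ^ 2
    + (108/13) * h ^ 3 * hp
    + (90/13) * h ^ 3 * hp * c
    + (54/13) * h ^ 3 * hp * c ^ 2
    + (-108/13) * h ^ 4
    + (-90/13) * h ^ 4 * c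
    + (-54/13) * h ^ 4 * c ^ 2
    + (-54/13) * h ^ 4 * hp
    + (-45/13) * h ^ 4 * hp * c
    + (54/13) * h ^ 5
    + (45/13) * h ^ 5 * c

noncomputable def ac1 (h hp c : ℝ) : ℝ :=
  8 * hp * c ^ 2
    + (-108/13) * h * hp
    + (534/13) * h * hp * c
    + (-316/13) * h * hp * c ^ 2
    + (54/13) * h ^ 2
    + (-579/13) * h ^ 2 * c
    + (158/13) * h ^ 2 * c ^ 2
    + (189/13) * h ^ 2 * hp
    + (-678/13) * h ^ 2 * hp * c
    + (162/13) * h ^ 2 * hp * c ^ 2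
    + (-81/13) * h ^ 3
    + (768/13) * h ^ 3 * c
    + (-108/13) * h ^ 3 * c ^ 2
    + (54/13) * h ^ 3 * hp
    + (144/13) * h ^ 3 * hp * c
    + (-108/13) * h ^ 4
    + (-189/13) * h ^ 4 * c
    + (-135/13) * h ^ 4 * hp
    + (135/13) * h ^ 5

noncomputable def ac2 (h hp c : ℝ) : ℝ :=
  8 * c ^ 2
    + (-54/13) * hp
    + (579/13) * hp * c
    + (-158/13) * hp * c ^ 2
    + (-54/13) * h
    + (-45/13) * h * c
    + (-158/13) * h * c ^ 2
    + (990/13) * h * hp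
    + (-1626/13) * h * hp * c
    + (162/13) * h * hp * c ^ 2
    + (-801/13) * h ^ 2
    + (948/13) * h ^ 2 * c
    + (-72) * h ^ 2 * hp
    + 54 * h ^ 2 * hp * c
    + (990/13) * h ^ 3
    + (-558/13) * h ^ 3 * c
    + (-54/13) * h ^ 3 * hp
    + (-81/13) * h ^ 4

noncomputable def ac3 (h hp c : ℝ) : ℝ :=
  (-54/13)
    + (579/13) * c
    + (-158/13) * c ^ 2
    + (909/13) * hp
    + (-66) * hp * c
    + (54/13) * hp * c ^ 2
    + (81/13) * h
    + (-768/13) * h * c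
    + (108/13) * h * c ^ 2
    + (-2250/13) * h * hp
    + (792/13) * h * hp * c
    + (1314/13) * h ^ 2
    + (-90/13) * h ^ 2 * c
    + (648/13) * h ^ 2 * hp
    + (-54) * h ^ 3

noncomputable def ac4 (h hp c : ℝ) : ℝ :=
  (909/13)
    + (-66) * c
    + (54/13) * c ^ 2
    + (-1206/13) * hp
    + (279/13) * hp * c
    + (-1044/13) * h
    + (513/13) * h * c
    + (918/13) * h * hp
    + (-270/13) * h ^ 2

noncomputable def ac5 (h hp c : ℝ) : ℝ :=
  (-1206/13)
    + (279/13) * c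
    + 27 * hp
    + (567/13) * h

noncomputable def ac6 (h hp c : ℝ) : ℝ :=
  27

open Topology in
lemma exists_small_ne (a0 a1 a2 a3 a4 a5 a6 ε : ℝ) (h6 : a6 ≠ 0) (hε : 0 < ε) :
    ∃ t : ℝ, 0 < t ∧ t < ε ∧
      a0 + a1 * t + a2 * t ^ 2 + a3 * t ^ 3 + a4 * t ^ 4 + a5 * t ^ 5 + a6 * t ^ 6 ≠ 0 := by
  classical
  set q : Polynomial ℝ :=
    Polynomial.C a0 + Polynomial.C a1 * Polynomial.X + Polynomial.C a2 * Polynomial.X ^ 2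
      + Polynomial.C a3 * Polynomial.X ^ 3 + Polynomial.C a4 * Polynomial.X ^ 4
      + Polynomial.C a5 * Polynomial.X ^ 5 + Polynomial.C a6 * Polynomial.X ^ 6 with hq
  have hqne : q ≠ 0 := by
    intro h0
    apply h6
    have := congrArg (fun p => Polynomial.coeff p 6) h0
    simpa [hq, Polynomial.coeff_add, Polynomial.coeff_C_mul, Polynomial.coeff_X_pow,
      Polynomial.coeff_C] using this
  have hfin : {x : ℝ | q.IsRoot x}.Finite := Polynomial.finite_setOf_isRoot hqne
  have hinf : (Set.Ioo (0:ℝ) ε).Infinite := Set.Ioo_infinite hε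
  obtain ⟨t, ht⟩ := (hinf.diff hfin).nonempty
  refine ⟨t, ht.1.1, ht.1.2, ?_⟩
  intro hzero
  apply ht.2
  show q.IsRoot t
  simp only [hq, Polynomial.IsRoot, Polynomial.eval_add, Polynomial.eval_mul,
    Polynomial.eval_pow, Polynomial.eval_C, Polynomial.eval_X]
  linarith

open Topology in
lemma hasDerivAt_mul_cont {u g : ℝ → ℝ} {u' t : ℝ} (hu : HasDerivAt u u' t)
    (h0 : u t = 0) (hg : ContinuousAt g t) :
    HasDerivAt (fun x => u x * g x) (u' * g t) t := by
  rw [hasDerivAt_iff_tendsto_slope] at hu ⊢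
  have heq : slope (fun x => u x * g x) t =ᶠ[𝓝[≠] t] fun x => slope u t x * g x := by
    filter_upwards [self_mem_nhdsWithin] with x hx
    have hxne : x - t ≠ 0 := sub_ne_zero.mpr hx
    simp only [slope_def_field, h0, mul_zero, sub_zero]
    field_simp
    try ring
  rw [Filter.tendsto_congr' heq]
  exact hu.mul (hg.tendsto.mono_left nhdsWithin_le_nhds)

set_option maxHeartbeats 1000000 in
lemma hPd_decomp : ∀ x y z : ℝ, Pfun (25/52) (-9/10) x y z =
    (x - 2/3) * APf x y z + (y - 2/3) * BPf y z + (z - 1/2) * CPf z := by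
  intro x y z; unfold Pfun APf BPf CPf; ring

set_option maxHeartbeats 1000000 in
lemma hSd_decomp : ∀ x y z : ℝ, St0 x y z =
    (x - 2/3) * ASf x y z + (y - 2/3) * BSf y z + (z - 1/2) * CSf z := by
  intro x y z; unfold St0 ASf BSf CSf; ring

set_option maxHeartbeats 4000000 in
lemma id0_St0 : ∀ h hp c : ℝ,
    (hp - h) * Pfun (25/52) (-9/10) h h c * St0 h hp c =
      2 * (h - 1) * h *
        (Sfun (25/52) (-9/10) h hp c * Pfun (25/52) (-9/10) h h c
          - Sfun (25/52) (-9/10) h h c * Pfun (25/52) (-9/10) h hp c) := by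
  intro h hp c; unfold Pfun Sfun St0; ring

set_option maxHeartbeats 1000000 in
lemma key_expand (h hp c t : ℝ) :
    (hp + 2*t - (h + t)) * Pfun (25/52) (-9/10) (h+t) (h+t) (c+3*t) =
      ac0 h hp c + ac1 h hp c * t + ac2 h hp c * t^2 + ac3 h hp c * t^3
        + ac4 h hp c * t^4 + ac5 h hp c * t^5 + 27 * t^6 := by
  unfold Pfun ac0 ac1 ac2 ac3 ac4 ac5; ring

set_option maxHeartbeats 1000000 in
lemma hdense_good : Dense {p : ℝ × ℝ × ℝ |
    p.2.1 - p.1 ≠ 0 ∧ Pfun (25/52) (-9/10) p.1 p.1 p.2.2 ≠ 0} := by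
  rw [Metric.dense_iff]
  rintro ⟨h, hp, c⟩ r hr
  obtain ⟨t, ht0, htr, htne⟩ := exists_small_ne (ac0 h hp c) (ac1 h hp c) (ac2 h hp c)
    (ac3 h hp c) (ac4 h hp c) (ac5 h hp c) 27 (r/3) (by norm_num) (by linarith)
  have hprod : (hp + 2*t - (h + t)) * Pfun (25/52) (-9/10) (h+t) (h+t) (c+3*t) ≠ 0 := by
    rw [key_expand]; exact htne
  obtain ⟨hne1, hne2⟩ := mul_ne_zero_iff.mp hprod
  refine ⟨(h + t, hp + 2*t, c + 3*t), ?_, hne1, hne2⟩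
  simp only [Metric.mem_ball, Prod.dist_eq, Real.dist_eq, add_sub_cancel_left]
  rw [abs_of_pos ht0, abs_of_pos (by linarith : (0:ℝ) < 2*t),
    abs_of_pos (by linarith : (0:ℝ) < 3*t)]
  exact max_lt (by linarith) (max_lt (by linarith) (by linarith))

lemma hAPc : Continuous (fun p : ℝ × ℝ × ℝ => APf p.1 p.2.1 p.2.2) := by unfold APf; fun_prop
lemma hBPc : Continuous (fun p : ℝ × ℝ => BPf p.1 p.2) := by unfold BPf; fun_prop
lemma hCPc : Continuous CPf := by unfold CPf; fun_prop
lemma hASc : Continuous (fun p : ℝ × ℝ × ℝ => ASf p.1 p.2.1 p.2.2) := by unfold ASf; fun_prop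
lemma hBSc : Continuous (fun p : ℝ × ℝ => BSf p.1 p.2) := by unfold BSf; fun_prop
lemma hCSc : Continuous CSf := by unfold CSf; fun_prop
lemma hSt0c : Continuous (fun p : ℝ × ℝ × ℝ => St0 p.1 p.2.1 p.2.2) := by unfold St0; fun_prop

lemma vAP : APf (2/3) (2/3) (1/2) = 8/39 := by unfold APf; norm_num
lemma vBP : BPf (2/3) (1/2) = 0 := by unfold BPf; norm_num
lemma vCP : CPf (1/2) = 116/117 := by unfold CPf; norm_num
lemma vAS : ASf (2/3) (2/3) (1/2) = 3/26 := by unfold ASf; norm_num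
lemma vBS : BSf (2/3) (1/2) = -75/26 := by unfold BSf; norm_num
lemma vCS : CSf (1/2) = 4 := by unfold CSf; norm_num

set_option maxHeartbeats 1000000 in
lemma hdPh : HasDerivAt (fun h => Pfun (25/52) (-9/10) h (2/3) (1/2)) (8/39) (2/3) := by
  have h1 : HasDerivAt (fun x : ℝ => (x - 2/3) * APf x (2/3) (1/2))
      (1 * APf (2/3) (2/3) (1/2)) (2/3) :=
    hasDerivAt_mul_cont ((hasDerivAt_id (2/3 : ℝ)).sub_const (2/3)) (by norm_num)
      ((hAPc.comp (continuous_id.prodMk (continuous_const.prodMk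
        continuous_const))).continuousAt)
  have h2 : (fun h => Pfun (25/52) (-9/10) h (2/3) (1/2))
      = fun x : ℝ => (x - 2/3) * APf x (2/3) (1/2) := by
    funext x; rw [hPd_decomp]; ring
  rw [h2, ← vAP]
  simpa using h1

set_option maxHeartbeats 1000000 in
lemma hdPhp : HasDerivAt (fun hp => Pfun (25/52) (-9/10) (2/3) hp (1/2)) (0) (2/3) := by
  have h1 : HasDerivAt (fun y : ℝ => (y - 2/3) * BPf y (1/2))
      (1 * BPf (2/3) (1/2)) (2/3) :=
    hasDerivAt_mul_cont ((hasDerivAt_id (2/3 : ℝ)).sub_const (2/3)) (by norm_num)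
      ((hBPc.comp (continuous_id.prodMk continuous_const)).continuousAt)
  have h2 : (fun hp => Pfun (25/52) (-9/10) (2/3) hp (1/2))
      = fun y : ℝ => (y - 2/3) * BPf y (1/2) := by
    funext y; rw [hPd_decomp]; ring
  rw [h2, ← vBP]
  simpa using h1

set_option maxHeartbeats 1000000 in
lemma hdPc : HasDerivAt (fun c => Pfun (25/52) (-9/10) (2/3) (2/3) c) (116/117) (1/2) := by
  have h1 : HasDerivAt (fun z : ℝ => (z - 1/2) * CPf z) (1 * CPf (1/2)) (1/2) :=
    hasDerivAt_mul_cont ((hasDerivAt_id (1/2 : ℝ)).sub_const (1/2)) (by norm_num)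
      hCPc.continuousAt
  have h2 : (fun c => Pfun (25/52) (-9/10) (2/3) (2/3) c)
      = fun z : ℝ => (z - 1/2) * CPf z := by
    funext z; rw [hPd_decomp]; ring
  rw [h2, ← vCP]
  simpa using h1

set_option maxHeartbeats 1000000 in
lemma hdSh : HasDerivAt (fun h => St0 h (2/3) (1/2)) (3/26) (2/3) := by
  have h1 : HasDerivAt (fun x : ℝ => (x - 2/3) * ASf x (2/3) (1/2))
      (1 * ASf (2/3) (2/3) (1/2)) (2/3) :=
    hasDerivAt_mul_cont ((hasDerivAt_id (2/3 : ℝ)).sub_const (2/3)) (by norm_num)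
      ((hASc.comp (continuous_id.prodMk (continuous_const.prodMk
        continuous_const))).continuousAt)
  have h2 : (fun h => St0 h (2/3) (1/2)) = fun x : ℝ => (x - 2/3) * ASf x (2/3) (1/2) := by
    funext x; rw [hSd_decomp]; ring
  rw [h2, ← vAS]
  simpa using h1

set_option maxHeartbeats 1000000 in
lemma hdShp : HasDerivAt (fun hp => St0 (2/3) hp (1/2)) (-75/26) (2/3) := by
  have h1 : HasDerivAt (fun y : ℝ => (y - 2/3) * BSf y (1/2)) (1 * BSf (2/3) (1/2)) (2/3) :=
    hasDerivAt_mul_cont ((hasDerivAt_id (2/3 : ℝ)).sub_const (2/3)) (by norm_num)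
      ((hBSc.comp (continuous_id.prodMk continuous_const)).continuousAt)
  have h2 : (fun hp => St0 (2/3) hp (1/2)) = fun y : ℝ => (y - 2/3) * BSf y (1/2) := by
    funext y; rw [hSd_decomp]; ring
  rw [h2, ← vBS]
  simpa using h1

set_option maxHeartbeats 1000000 in
lemma hdSc : HasDerivAt (fun c => St0 (2/3) (2/3) c) (4) (1/2) := by
  have h1 : HasDerivAt (fun z : ℝ => (z - 1/2) * CSf z) (1 * CSf (1/2)) (1/2) :=
    hasDerivAt_mul_cont ((hasDerivAt_id (1/2 : ℝ)).sub_const (1/2)) (by norm_num)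
      hCSc.continuousAt
  have h2 : (fun c => St0 (2/3) (2/3) c) = fun z : ℝ => (z - 1/2) * CSf z := by
    funext z; rw [hSd_decomp]; ring
  rw [h2, ← vCS]
  simpa using h1

set_option maxHeartbeats 1000000 in
lemma Pfun_at_pt : Pfun (25/52) (-9/10) (2/3) (2/3) (1/2) = 0 := by unfold Pfun; norm_num

lemma St0_at_pt : St0 (2/3) (2/3) (1/2) = 0 := by unfold St0; norm_num

attribute [irreducible] Pfun Sfun St0 APf BPf CPf ASf BSf CSf ac0 ac1 ac2 ac3 ac4 ac5

set_option maxHeartbeats 2000000 in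
/-- A "generic" conjugate-flow example without critical layers:
ρ = 25/52, ω = −9/10, h₀ = 2/3, c₀ = 1/2. Here `St` is the desingularized
flow-force polynomial `S̃`, characterized (uniquely, by continuity) by the identity
`(h₊−h)·P(h,h,c)·S̃ = 2(h−1)h·(S(h,h₊,c)P(h,h,c) − S(h,h,c)P(h,h₊,c))`. -/
theorem generic_example_no_critical_layer
    (St : ℝ → ℝ → ℝ → ℝ)
    (hStcont : Continuous fun p : ℝ × ℝ × ℝ => St p.1 p.2.1 p.2.2)
    (hStid : ∀ h hp c : ℝ,
      (hp - h) * Pfun (25 / 52) (-9 / 10) h h c * St h hp c =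
        2 * (h - 1) * h *
          (Sfun (25 / 52) (-9 / 10) h hp c * Pfun (25 / 52) (-9 / 10) h h c
            - Sfun (25 / 52) (-9 / 10) h h c * Pfun (25 / 52) (-9 / 10) h hp c)) :
    -- (i) the conjugate-flow (bifurcation) condition 𝒫(h₀, h₀, c₀) = 0
    Pfun (25 / 52) (-9 / 10) (2 / 3) (2 / 3) (1 / 2) = 0 ∧
    St (2 / 3) (2 / 3) (1 / 2) = 0 ∧
    -- (ii) the two nondegeneracy determinants are nonzero
    (deriv (fun h => Pfun (25 / 52) (-9 / 10) h (2 / 3) (1 / 2)) (2 / 3)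
        * deriv (fun hp => St (2 / 3) hp (1 / 2)) (2 / 3)
      - deriv (fun hp => Pfun (25 / 52) (-9 / 10) (2 / 3) hp (1 / 2)) (2 / 3)
        * deriv (fun h => St h (2 / 3) (1 / 2)) (2 / 3) ≠ 0) ∧
    ((deriv (fun h => Pfun (25 / 52) (-9 / 10) h (2 / 3) (1 / 2)) (2 / 3)
        + deriv (fun hp => Pfun (25 / 52) (-9 / 10) (2 / 3) hp (1 / 2)) (2 / 3))
        * deriv (fun c => St (2 / 3) (2 / 3) c) (1 / 2)
      - deriv (fun c => Pfun (25 / 52) (-9 / 10) (2 / 3) (2 / 3) c) (1 / 2)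
        * (deriv (fun h => St h (2 / 3) (1 / 2)) (2 / 3)
          + deriv (fun hp => St (2 / 3) hp (1 / 2)) (2 / 3)) ≠ 0) ∧
    -- (iii) positivity of the cubic coefficient: h₀³(1−ρ) + 4c₀²(1−h₀) > c₀²h₀
    ((2 / 3 : ℝ) ^ 3 * (1 - 25 / 52) + 4 * (1 / 2) ^ 2 * (1 - 2 / 3)
      > (1 / 2 : ℝ) ^ 2 * (2 / 3)) ∧
    -- (iv) no critical layer: c₀(c₀ + (1−h₀)ω) > 0
    ((1 / 2 : ℝ) * (1 / 2 + (1 - 2 / 3) * (-9 / 10)) > 0) ∧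
    -- (v) the unique solution of ∂_{h₊}𝒫·a + ∂_c𝒫·b = −∂_h𝒫 is (−179/725, −6/29)
    (∀ a b : ℝ,
      (deriv (fun hp => Pfun (25 / 52) (-9 / 10) (2 / 3) hp (1 / 2)) (2 / 3) * a
          + deriv (fun c => Pfun (25 / 52) (-9 / 10) (2 / 3) (2 / 3) c) (1 / 2) * b
          = -deriv (fun h => Pfun (25 / 52) (-9 / 10) h (2 / 3) (1 / 2)) (2 / 3) ∧
        deriv (fun hp => St (2 / 3) hp (1 / 2)) (2 / 3) * a
          + deriv (fun c => St (2 / 3) (2 / 3) c) (1 / 2) * b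
          = -deriv (fun h => St h (2 / 3) (1 / 2)) (2 / 3))
        ↔ (a = -179 / 725 ∧ b = -6 / 29)) ∧
    -- consequently, any differentiable conjugate-flow family through this point
    -- satisfies h₊'(0) = −179/725 and c'(0) = −6/29
    (∀ hplus cc : ℝ → ℝ, DifferentiableAt ℝ hplus 0 → DifferentiableAt ℝ cc 0 →
      hplus 0 = 2 / 3 → cc 0 = 1 / 2 →
      (∀ᶠ ε in nhds (0 : ℝ),
        Pfun (25 / 52) (-9 / 10) (2 / 3 + ε) (hplus ε) (cc ε) = 0 ∧
        St (2 / 3 + ε) (hplus ε) (cc ε) = 0) →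
      deriv hplus 0 = -179 / 725 ∧ deriv cc 0 = -6 / 29) := by
  -- St agrees with St0 everywhere
  have hSteq : ∀ x y z : ℝ, St x y z = St0 x y z := by
    have heq : Set.EqOn (fun p : ℝ × ℝ × ℝ => St p.1 p.2.1 p.2.2)
        (fun p : ℝ × ℝ × ℝ => St0 p.1 p.2.1 p.2.2)
        {p : ℝ × ℝ × ℝ | p.2.1 - p.1 ≠ 0 ∧ Pfun (25/52) (-9/10) p.1 p.1 p.2.2 ≠ 0} := by
      rintro ⟨x, y, z⟩ ⟨hne1, hne2⟩
      have h1 := hStid x y z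
      have h2 := id0_St0 x y z
      have hmul : (y - x) * Pfun (25/52) (-9/10) x x z ≠ 0 := mul_ne_zero hne1 hne2
      exact mul_left_cancel₀ hmul (h1.trans h2.symm)
    have hcl := heq.closure hStcont hSt0c
    intro x y z
    have hmem : ((x, y, z) : ℝ × ℝ × ℝ) ∈ closure {p : ℝ × ℝ × ℝ |
        p.2.1 - p.1 ≠ 0 ∧ Pfun (25/52) (-9/10) p.1 p.1 p.2.2 ≠ 0} := hdense_good _
    exact hcl hmem
  -- rewrite the St-lambdas to St0
  have fS1 : (fun hp => St (2/3) hp (1/2)) = fun hp => St0 (2/3) hp (1/2) :=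
    funext fun y => hSteq _ _ _
  have fS2 : (fun h => St h (2/3) (1/2)) = fun h => St0 h (2/3) (1/2) :=
    funext fun x => hSteq _ _ _
  have fS3 : (fun c => St (2/3) (2/3) c) = fun c => St0 (2/3) (2/3) c :=
    funext fun z => hSteq _ _ _
  refine ⟨Pfun_at_pt, by rw [hSteq]; exact St0_at_pt, ?_, ?_, by norm_num, by norm_num, ?_, ?_⟩
  · rw [fS1, fS2, hdPh.deriv, hdPhp.deriv, hdShp.deriv, hdSh.deriv]; norm_num
  · rw [fS1, fS2, fS3, hdPh.deriv, hdPhp.deriv, hdPc.deriv, hdShp.deriv, hdSh.deriv,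
      hdSc.deriv]
    norm_num
  · intro a b
    rw [fS1, fS3, fS2, hdPh.deriv, hdPhp.deriv, hdPc.deriv, hdShp.deriv, hdSh.deriv,
      hdSc.deriv]
    constructor
    · rintro ⟨e1, e2⟩
      constructor <;> linarith
    · rintro ⟨rfl, rfl⟩
      constructor <;> norm_num
  · intro hplus cc hdh hdc h0 c0 hev
    have hu : HasDerivAt hplus (deriv hplus 0) 0 := hdh.hasDerivAt
    have hv : HasDerivAt cc (deriv cc 0) 0 := hdc.hasDerivAt
    have hcu : ContinuousAt hplus 0 := hdh.continuousAt
    have hcv : ContinuousAt cc 0 := hdc.continuousAt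
    have hcurve : ContinuousAt (fun ε : ℝ => ((2/3 + ε : ℝ), (hplus ε, cc ε))) 0 :=
      (continuousAt_const.add continuousAt_id).prodMk (hcu.prodMk hcv)
    have ht1P : HasDerivAt (fun ε : ℝ => (2/3 + ε - 2/3) * APf (2/3 + ε) (hplus ε) (cc ε))
        (1 * APf (2/3) (2/3) (1/2)) 0 := by
      have := hasDerivAt_mul_cont
        (u := fun ε : ℝ => 2/3 + ε - 2/3) (g := fun ε => APf (2/3 + ε) (hplus ε) (cc ε))
        (((hasDerivAt_id (0:ℝ)).const_add (2/3)).sub_const (2/3))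
        (by norm_num) (hAPc.continuousAt.comp hcurve)
      simpa [h0, c0] using this
    have ht2P : HasDerivAt (fun ε : ℝ => (hplus ε - 2/3) * BPf (hplus ε) (cc ε))
        (deriv hplus 0 * BPf (2/3) (1/2)) 0 := by
      have := hasDerivAt_mul_cont
        (u := fun ε : ℝ => hplus ε - 2/3) (g := fun ε => BPf (hplus ε) (cc ε))
        (hu.sub_const (2/3)) (by show hplus 0 - 2/3 = 0; rw [h0]; norm_num)
        (hBPc.continuousAt.comp (hcu.prodMk hcv))
      simpa [h0, c0] using this
    have ht3P : HasDerivAt (fun ε : ℝ => (cc ε - 1/2) * CPf (cc ε))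
        (deriv cc 0 * CPf (1/2)) 0 := by
      have := hasDerivAt_mul_cont
        (u := fun ε : ℝ => cc ε - 1/2) (g := fun ε => CPf (cc ε))
        (hv.sub_const (1/2)) (by show cc 0 - 1/2 = 0; rw [c0]; norm_num)
        (hCPc.continuousAt.comp hcv)
      simpa [c0] using this
    have hFP : HasDerivAt (fun ε : ℝ => Pfun (25/52) (-9/10) (2/3 + ε) (hplus ε) (cc ε))
        (1 * APf (2/3) (2/3) (1/2) + deriv hplus 0 * BPf (2/3) (1/2)
          + deriv cc 0 * CPf (1/2)) 0 := by
      have hfe : (fun ε : ℝ => Pfun (25/52) (-9/10) (2/3 + ε) (hplus ε) (cc ε))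
          = fun ε : ℝ => (2/3 + ε - 2/3) * APf (2/3 + ε) (hplus ε) (cc ε)
            + (hplus ε - 2/3) * BPf (hplus ε) (cc ε) + (cc ε - 1/2) * CPf (cc ε) := by
        funext ε; rw [hPd_decomp]
      rw [hfe]
      exact (ht1P.add ht2P).add ht3P
    have ht1S : HasDerivAt (fun ε : ℝ => (2/3 + ε - 2/3) * ASf (2/3 + ε) (hplus ε) (cc ε))
        (1 * ASf (2/3) (2/3) (1/2)) 0 := by
      have := hasDerivAt_mul_cont
        (u := fun ε : ℝ => 2/3 + ε - 2/3) (g := fun ε => ASf (2/3 + ε) (hplus ε) (cc ε))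
        (((hasDerivAt_id (0:ℝ)).const_add (2/3)).sub_const (2/3))
        (by norm_num) (hASc.continuousAt.comp hcurve)
      simpa [h0, c0] using this
    have ht2S : HasDerivAt (fun ε : ℝ => (hplus ε - 2/3) * BSf (hplus ε) (cc ε))
        (deriv hplus 0 * BSf (2/3) (1/2)) 0 := by
      have := hasDerivAt_mul_cont
        (u := fun ε : ℝ => hplus ε - 2/3) (g := fun ε => BSf (hplus ε) (cc ε))
        (hu.sub_const (2/3)) (by show hplus 0 - 2/3 = 0; rw [h0]; norm_num)
        (hBSc.continuousAt.comp (hcu.prodMk hcv))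
      simpa [h0, c0] using this
    have ht3S : HasDerivAt (fun ε : ℝ => (cc ε - 1/2) * CSf (cc ε))
        (deriv cc 0 * CSf (1/2)) 0 := by
      have := hasDerivAt_mul_cont
        (u := fun ε : ℝ => cc ε - 1/2) (g := fun ε => CSf (cc ε))
        (hv.sub_const (1/2)) (by show cc 0 - 1/2 = 0; rw [c0]; norm_num)
        (hCSc.continuousAt.comp hcv)
      simpa [c0] using this
    have hFS : HasDerivAt (fun ε : ℝ => St0 (2/3 + ε) (hplus ε) (cc ε))
        (1 * ASf (2/3) (2/3) (1/2) + deriv hplus 0 * BSf (2/3) (1/2)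
          + deriv cc 0 * CSf (1/2)) 0 := by
      have hfe : (fun ε : ℝ => St0 (2/3 + ε) (hplus ε) (cc ε))
          = fun ε : ℝ => (2/3 + ε - 2/3) * ASf (2/3 + ε) (hplus ε) (cc ε)
            + (hplus ε - 2/3) * BSf (hplus ε) (cc ε) + (cc ε - 1/2) * CSf (cc ε) := by
        funext ε; rw [hSd_decomp]
      rw [hfe]
      exact (ht1S.add ht2S).add ht3S
    have hevP : (fun ε : ℝ => Pfun (25/52) (-9/10) (2/3 + ε) (hplus ε) (cc ε))
        =ᶠ[nhds (0:ℝ)] fun _ => 0 := hev.mono fun ε hε => hε.1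
    have hevS : (fun ε : ℝ => St0 (2/3 + ε) (hplus ε) (cc ε))
        =ᶠ[nhds (0:ℝ)] fun _ => 0 := hev.mono fun ε hε => by
      show St0 _ _ _ = 0
      rw [← hSteq]; exact hε.2
    have eqP : 1 * APf (2/3) (2/3) (1/2) + deriv hplus 0 * BPf (2/3) (1/2)
        + deriv cc 0 * CPf (1/2) = 0 := by
      rw [← hFP.deriv, hevP.deriv_eq]; exact deriv_const _ _
    have eqS : 1 * ASf (2/3) (2/3) (1/2) + deriv hplus 0 * BSf (2/3) (1/2)
        + deriv cc 0 * CSf (1/2) = 0 := by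
      rw [← hFS.deriv, hevS.deriv_eq]; exact deriv_const _ _
    rw [vAP, vBP, vCP] at eqP
    rw [vAS, vBS, vCS] at eqS
    constructor <;> linarith
end

section
/- Set ρ := 1/28, ω := −18, h₀ := 2/3, c₀ := 1. Then: (i) P(h₀, h₀, c₀) = 0 and S̃(h₀, h₀, c₀) = 0; (ii) det D_{(h,h₊)}𝒫(h₀, h₀, c₀) ≠ 0 and det[(∂_h𝒫 + ∂_{h₊}𝒫)(h₀,h₀,c₀), ∂_c𝒫(h₀,h₀,c₀)] ≠ 0; (iii) h₀³(1−ρ) + 4c₀²(1−h₀) > c₀²h₀; (iv) c₀(c₀ + (1−h₀)ω) < 0 (so there is a critical layer); and (v) the unique pair (a,b) ∈ ℝ² solving the linear system ∂_{h₊}𝒫(h₀,h₀,c₀)·a + ∂_c𝒫(h₀,h₀,c₀)·b = −∂_h𝒫(h₀,h₀,c₀) is (a,b) = (11/10, 3/4); consequently any differentiable conjugate-flow family (h₀+ε, h₊(ε), c(ε)) through this point satisfies h₊'(0) = 11/10 and c'(0) = 3/4. -/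
open Real Set Filter

/-- The explicit desingularized flow-force polynomial for ρ = 1/28, ω = −18. -/
noncomputable def StPoly (h hp c : ℝ) : ℝ :=
  (-12 : ℝ) * c ^ 2 + (162/7 : ℝ) * hp + (108/7 : ℝ) * hp * c + (162/7 : ℝ) * hp * c ^ 2 + (-1296/7 : ℝ) * hp ^ 2 + (-54/7 : ℝ) * hp ^ 2 * c + (-81/7 : ℝ) * hp ^ 2 * c ^ 2 + (162 : ℝ) * hp ^ 3 + (-243/7 : ℝ) * hp ^ 4 + (24 : ℝ) * h * c ^ 2 + (486/7 : ℝ) * h * hp + (-216/7 : ℝ) * h * hp * c + (-162/7 : ℝ) * h * hp * c ^ 2 + (972/7 : ℝ) * h * hp ^ 2 + (54/7 : ℝ) * h * hp ^ 2 * c + (-486/7 : ℝ) * h * hp ^ 3 + (-162 : ℝ) * h ^ 2 * hp + (108/7 : ℝ) * h ^ 2 * hp * c + (-81/7 : ℝ) * h ^ 2 * hp ^ 2 + (486/7 : ℝ) * h ^ 3 * hp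

set_option maxHeartbeats 1000000 in
lemma StPoly_id (h hp c : ℝ) :
    (hp - h) * Pfun (1 / 28) (-18) h h c * StPoly h hp c =
      2 * (h - 1) * h *
        (Sfun (1 / 28) (-18) h hp c * Pfun (1 / 28) (-18) h h c
          - Sfun (1 / 28) (-18) h h c * Pfun (1 / 28) (-18) h hp c) := by
  unfold Pfun Sfun StPoly; ring

lemma dense_quad (A B C : ℝ) (hA : A ≠ 0) : Dense {x : ℝ | A*x^2 + B*x + C ≠ 0} := by
  intro x
  rw [Metric.mem_closure_iff]
  intro ε hε
  by_cases hx : A*x^2 + B*x + C ≠ 0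
  · exact ⟨x, hx, by simpa using hε⟩
  · push_neg at hx
    by_cases hD : A*(ε/2) + (2*A*x + B) = 0
    · refine ⟨x + ε/3, ?_, ?_⟩
      · show A*(x + ε/3)^2 + B*(x + ε/3) + C ≠ 0
        have hexp : A*(x + ε/3)^2 + B*(x + ε/3) + C = (ε/3)*(A*(ε/3) + (2*A*x + B)) := by
          linear_combination hx
        rw [hexp]
        refine mul_ne_zero (by positivity) ?_
        intro h3
        have h6 : A * (ε/6) = 0 := by linear_combination hD - h3
        rcases mul_eq_zero.mp h6 with h | h
        · exact hA h
        · exact absurd h (by positivity)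
      · have hre : x - (x + ε/3) = -(ε/3) := by ring
        rw [Real.dist_eq, hre, abs_neg, abs_of_pos (by positivity)]
        linarith
    · refine ⟨x + ε/2, ?_, ?_⟩
      · show A*(x + ε/2)^2 + B*(x + ε/2) + C ≠ 0
        have hexp : A*(x + ε/2)^2 + B*(x + ε/2) + C = (ε/2)*(A*(ε/2) + (2*A*x + B)) := by
          linear_combination hx
        rw [hexp]
        exact mul_ne_zero (by positivity) hD
      · have hre : x - (x + ε/2) = -(ε/2) := by ring
        rw [Real.dist_eq, hre, abs_neg, abs_of_pos (by positivity)]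
        linarith

set_option maxHeartbeats 2000000 in
/-- A "generic" conjugate-flow example with critical layers:
ρ = 1/28, ω = −18, h₀ = 2/3, c₀ = 1. Here `St` is the desingularized
flow-force polynomial `S̃`, characterized (uniquely, by continuity) by the identity
`(h₊−h)·P(h,h,c)·S̃ = 2(h−1)h·(S(h,h₊,c)P(h,h,c) − S(h,h,c)P(h,h₊,c))`. -/
theorem generic_example_with_critical_layer
    (St : ℝ → ℝ → ℝ → ℝ)
    (hStcont : Continuous fun p : ℝ × ℝ × ℝ => St p.1 p.2.1 p.2.2)
    (hStid : ∀ h hp c : ℝ,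
      (hp - h) * Pfun (1 / 28) (-18) h h c * St h hp c =
        2 * (h - 1) * h *
          (Sfun (1 / 28) (-18) h hp c * Pfun (1 / 28) (-18) h h c
            - Sfun (1 / 28) (-18) h h c * Pfun (1 / 28) (-18) h hp c)) :
    -- (i) the conjugate-flow (bifurcation) condition 𝒫(h₀, h₀, c₀) = 0
    Pfun (1 / 28) (-18) (2 / 3) (2 / 3) 1 = 0 ∧
    St (2 / 3) (2 / 3) 1 = 0 ∧
    -- (ii) the two nondegeneracy determinants are nonzero
    (deriv (fun h => Pfun (1 / 28) (-18) h (2 / 3) 1) (2 / 3)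
        * deriv (fun hp => St (2 / 3) hp 1) (2 / 3)
      - deriv (fun hp => Pfun (1 / 28) (-18) (2 / 3) hp 1) (2 / 3)
        * deriv (fun h => St h (2 / 3) 1) (2 / 3) ≠ 0) ∧
    ((deriv (fun h => Pfun (1 / 28) (-18) h (2 / 3) 1) (2 / 3)
        + deriv (fun hp => Pfun (1 / 28) (-18) (2 / 3) hp 1) (2 / 3))
        * deriv (fun c => St (2 / 3) (2 / 3) c) 1
      - deriv (fun c => Pfun (1 / 28) (-18) (2 / 3) (2 / 3) c) 1
        * (deriv (fun h => St h (2 / 3) 1) (2 / 3)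
          + deriv (fun hp => St (2 / 3) hp 1) (2 / 3)) ≠ 0) ∧
    -- (iii) positivity of the cubic coefficient: h₀³(1−ρ) + 4c₀²(1−h₀) > c₀²h₀
    ((2 / 3 : ℝ) ^ 3 * (1 - 1 / 28) + 4 * (1 : ℝ) ^ 2 * (1 - 2 / 3)
      > (1 : ℝ) ^ 2 * (2 / 3)) ∧
    -- (iv) a critical layer is present: c₀(c₀ + (1−h₀)ω) < 0
    ((1 : ℝ) * (1 + (1 - 2 / 3) * (-18)) < 0) ∧
    -- (v) the unique solution of ∂_{h₊}𝒫·a + ∂_c𝒫·b = −∂_h𝒫 is (11/10, 3/4)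
    (∀ a b : ℝ,
      (deriv (fun hp => Pfun (1 / 28) (-18) (2 / 3) hp 1) (2 / 3) * a
          + deriv (fun c => Pfun (1 / 28) (-18) (2 / 3) (2 / 3) c) 1 * b
          = -deriv (fun h => Pfun (1 / 28) (-18) h (2 / 3) 1) (2 / 3) ∧
        deriv (fun hp => St (2 / 3) hp 1) (2 / 3) * a
          + deriv (fun c => St (2 / 3) (2 / 3) c) 1 * b
          = -deriv (fun h => St h (2 / 3) 1) (2 / 3))
        ↔ (a = 11 / 10 ∧ b = 3 / 4)) ∧
    -- consequently, any differentiable conjugate-flow family through this point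
    -- satisfies h₊'(0) = 11/10 and c'(0) = 3/4
    (∀ hplus cc : ℝ → ℝ, DifferentiableAt ℝ hplus 0 → DifferentiableAt ℝ cc 0 →
      hplus 0 = 2 / 3 → cc 0 = 1 →
      (∀ᶠ ε in nhds (0 : ℝ),
        Pfun (1 / 28) (-18) (2 / 3 + ε) (hplus ε) (cc ε) = 0 ∧
        St (2 / 3 + ε) (hplus ε) (cc ε) = 0) →
      deriv hplus 0 = 11 / 10 ∧ deriv cc 0 = 3 / 4) := by
  -- the fundamental product identity
  have hzero : ∀ h hp c : ℝ,
      (hp - h) * Pfun (1 / 28) (-18) h h c * (St h hp c - StPoly h hp c) = 0 := by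
    intro h hp c
    linear_combination hStid h hp c - StPoly_id h hp c
  -- Step 1: where P(h,h,c) ≠ 0, St agrees with StPoly
  have step1 : ∀ h c : ℝ, Pfun (1 / 28) (-18) h h c ≠ 0 →
      ∀ hp : ℝ, St h hp c = StPoly h hp c := by
    intro h c hQ
    have hco1 : Continuous (fun hp : ℝ => St h hp c) :=
      hStcont.comp (continuous_const.prodMk (continuous_id.prodMk continuous_const))
    have hco2 : Continuous (fun hp : ℝ => StPoly h hp c) := by
      unfold StPoly; fun_prop
    have heq : Set.EqOn (fun hp : ℝ => St h hp c) (fun hp : ℝ => StPoly h hp c) ({h} : Set ℝ)ᶜ := by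
      intro hp hhp
      have h1 := hzero h hp c
      have h2 : hp - h ≠ 0 := sub_ne_zero.mpr (by simpa using hhp)
      have h3 : St h hp c - StPoly h hp c = 0 := by
        by_contra hne
        exact mul_ne_zero (mul_ne_zero h2 hQ) hne h1
      have := sub_eq_zero.mp h3
      simpa using this
    have := Continuous.ext_on (dense_compl_singleton h) hco1 hco2 heq
    intro hp
    exact congrFun this hp
  -- Step 2: where the leading c²-coefficient of P(h,h,·) is nonzero
  have step2 : ∀ h : ℝ, ((8 : ℝ) * h + (-110/7 : ℝ) * h ^ 2 + (54/7 : ℝ) * h ^ 3) ≠ 0 →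
      ∀ hp c : ℝ, St h hp c = StPoly h hp c := by
    intro h hA hp c
    have hco1 : Continuous (fun c' : ℝ => St h hp c') :=
      hStcont.comp (continuous_const.prodMk (continuous_const.prodMk continuous_id))
    have hco2 : Continuous (fun c' : ℝ => StPoly h hp c') := by
      unfold StPoly; fun_prop
    have heq : Set.EqOn (fun c' : ℝ => St h hp c') (fun c' : ℝ => StPoly h hp c')
        {x : ℝ | ((8 : ℝ) * h + (-110/7 : ℝ) * h ^ 2 + (54/7 : ℝ) * h ^ 3)*x^2 + ((-36/7 : ℝ) * h ^ 2 + (72/7 : ℝ) * h ^ 3 + (-36/7 : ℝ) * h ^ 4)*x + ((-54/7 : ℝ) * h ^ 2 + (108/7 : ℝ) * h ^ 3 + (-54/7 : ℝ) * h ^ 4) ≠ 0} := by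
      intro c' hc'
      have hQ : Pfun (1 / 28) (-18) h h c' ≠ 0 := by
        have hrw : Pfun (1 / 28) (-18) h h c'
            = ((8 : ℝ) * h + (-110/7 : ℝ) * h ^ 2 + (54/7 : ℝ) * h ^ 3)*c'^2 + ((-36/7 : ℝ) * h ^ 2 + (72/7 : ℝ) * h ^ 3 + (-36/7 : ℝ) * h ^ 4)*c' + ((-54/7 : ℝ) * h ^ 2 + (108/7 : ℝ) * h ^ 3 + (-54/7 : ℝ) * h ^ 4) := by
          unfold Pfun; ring
        rw [hrw]
        exact hc'
      exact step1 h c' hQ hp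
    have := Continuous.ext_on (dense_quad _ _ _ hA) hco1 hco2 heq
    exact congrFun this c
  -- the key equality on the strip 0 < h < 1
  have key : ∀ h : ℝ, 0 < h → h < 1 → ∀ hp c : ℝ, St h hp c = StPoly h hp c := by
    intro h h0 h1
    apply step2
    have hpos : (0:ℝ) < (8 : ℝ) * h + (-110/7 : ℝ) * h ^ 2 + (54/7 : ℝ) * h ^ 3 := by
      nlinarith [mul_pos (mul_pos h0 (show (0:ℝ) < 28 - 27*h by linarith))
        (show (0:ℝ) < 1 - h by linarith)]
    exact hpos.ne'
  -- function-level identifications near the point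
  have eShp : (fun hp => St (2 / 3 : ℝ) hp 1) = (fun hp => StPoly (2 / 3) hp 1) := by
    funext hp
    exact key (2/3) (by norm_num) (by norm_num) hp 1
  have eSc : (fun c => St (2 / 3 : ℝ) (2 / 3) c) = (fun c => StPoly (2 / 3) (2 / 3) c) := by
    funext c
    exact key (2/3) (by norm_num) (by norm_num) (2/3) c
  have hIoo : Ioo (0:ℝ) 1 ∈ nhds (2/3 : ℝ) := Ioo_mem_nhds (by norm_num) (by norm_num)
  have eSh : (fun h => St h (2 / 3 : ℝ) 1) =ᶠ[nhds (2/3 : ℝ)] (fun h => StPoly h (2 / 3) 1) := by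
    filter_upwards [hIoo] with x hx
    exact key x hx.1 hx.2 (2/3) 1
  -- the six partial derivatives
  have dPh : deriv (fun h => Pfun (1 / 28) (-18) h (2 / 3) 1) (2 / 3) = (-16/21 : ℝ) := by
    have e : (fun h => Pfun (1 / 28) (-18) h (2 / 3) 1 : ℝ → ℝ) = fun t : ℝ => (32/7 : ℝ) + (-320/21 : ℝ) * t ^ 1 + (16 : ℝ) * t ^ 2 + (-36/7 : ℝ) * t ^ 3 + (0 : ℝ) * t ^ 4 + (0 : ℝ) * t ^ 5 := by
      funext t; unfold Pfun; ring
    have hD := ((((((hasDerivAt_const (2 / 3 : ℝ) (32/7 : ℝ)).add ((hasDerivAt_pow 1 (2 / 3 : ℝ)).const_mul (-320/21 : ℝ))).add ((hasDerivAt_pow 2 (2 / 3 : ℝ)).const_mul (16 : ℝ))).add ((hasDerivAt_pow 3 (2 / 3 : ℝ)).const_mul (-36/7 : ℝ))).add ((hasDerivAt_pow 4 (2 / 3 : ℝ)).const_mul (0 : ℝ))).add ((hasDerivAt_pow 5 (2 / 3 : ℝ)).const_mul (0 : ℝ)))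
    rw [e]; refine hD.deriv.trans ?_
    norm_num
  have dPhp : deriv (fun hp => Pfun (1 / 28) (-18) (2 / 3) hp 1) (2 / 3) = (0 : ℝ) := by
    have e : (fun hp => Pfun (1 / 28) (-18) (2 / 3) hp 1 : ℝ → ℝ) = fun t : ℝ => (8/3 : ℝ) + (-4/3 : ℝ) * t ^ 1 + (-194/7 : ℝ) * t ^ 2 + (429/7 : ℝ) * t ^ 3 + (-324/7 : ℝ) * t ^ 4 + (81/7 : ℝ) * t ^ 5 := by
      funext t; unfold Pfun; ring
    have hD := ((((((hasDerivAt_const (2 / 3 : ℝ) (8/3 : ℝ)).add ((hasDerivAt_pow 1 (2 / 3 : ℝ)).const_mul (-4/3 : ℝ))).add ((hasDerivAt_pow 2 (2 / 3 : ℝ)).const_mul (-194/7 : ℝ))).add ((hasDerivAt_pow 3 (2 / 3 : ℝ)).const_mul (429/7 : ℝ))).add ((hasDerivAt_pow 4 (2 / 3 : ℝ)).const_mul (-324/7 : ℝ))).add ((hasDerivAt_pow 5 (2 / 3 : ℝ)).const_mul (81/7 : ℝ)))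
    rw [e]; refine hD.deriv.trans ?_
    norm_num
  have dPc : deriv (fun c => Pfun (1 / 28) (-18) (2 / 3) (2 / 3) c) (1) = (64/63 : ℝ) := by
    have e : (fun c => Pfun (1 / 28) (-18) (2 / 3) (2 / 3) c : ℝ → ℝ) = fun t : ℝ => (-8/21 : ℝ) + (-16/63 : ℝ) * t ^ 1 + (40/63 : ℝ) * t ^ 2 + (0 : ℝ) * t ^ 3 + (0 : ℝ) * t ^ 4 + (0 : ℝ) * t ^ 5 := by
      funext t; unfold Pfun; ring
    have hD := ((((((hasDerivAt_const (1 : ℝ) (-8/21 : ℝ)).add ((hasDerivAt_pow 1 (1 : ℝ)).const_mul (-16/63 : ℝ))).add ((hasDerivAt_pow 2 (1 : ℝ)).const_mul (40/63 : ℝ))).add ((hasDerivAt_pow 3 (1 : ℝ)).const_mul (0 : ℝ))).add ((hasDerivAt_pow 4 (1 : ℝ)).const_mul (0 : ℝ))).add ((hasDerivAt_pow 5 (1 : ℝ)).const_mul (0 : ℝ)))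
    rw [e]; refine hD.deriv.trans ?_
    norm_num
  have dShp' : deriv (fun hp => StPoly (2 / 3) hp 1) (2 / 3) = (-60/7 : ℝ) := by
    have e : (fun hp => StPoly (2 / 3) hp 1 : ℝ → ℝ) = fun t : ℝ => (4 : ℝ) + (192/7 : ℝ) * t ^ 1 + (-783/7 : ℝ) * t ^ 2 + (810/7 : ℝ) * t ^ 3 + (-243/7 : ℝ) * t ^ 4 + (0 : ℝ) * t ^ 5 := by
      funext t; unfold StPoly; ring
    have hD := ((((((hasDerivAt_const (2 / 3 : ℝ) (4 : ℝ)).add ((hasDerivAt_pow 1 (2 / 3 : ℝ)).const_mul (192/7 : ℝ))).add ((hasDerivAt_pow 2 (2 / 3 : ℝ)).const_mul (-783/7 : ℝ))).add ((hasDerivAt_pow 3 (2 / 3 : ℝ)).const_mul (810/7 : ℝ))).add ((hasDerivAt_pow 4 (2 / 3 : ℝ)).const_mul (-243/7 : ℝ))).add ((hasDerivAt_pow 5 (2 / 3 : ℝ)).const_mul (0 : ℝ)))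
    rw [e]; refine hD.deriv.trans ?_
    norm_num
  have dSh' : deriv (fun h => StPoly h (2 / 3) 1) (2 / 3) = (24/7 : ℝ) := by
    have e : (fun h => StPoly h (2 / 3) 1 : ℝ → ℝ) = fun t : ℝ => (-144/7 : ℝ) + (552/7 : ℝ) * t ^ 1 + (-720/7 : ℝ) * t ^ 2 + (324/7 : ℝ) * t ^ 3 + (0 : ℝ) * t ^ 4 + (0 : ℝ) * t ^ 5 := by
      funext t; unfold StPoly; ring
    have hD := ((((((hasDerivAt_const (2 / 3 : ℝ) (-144/7 : ℝ)).add ((hasDerivAt_pow 1 (2 / 3 : ℝ)).const_mul (552/7 : ℝ))).add ((hasDerivAt_pow 2 (2 / 3 : ℝ)).const_mul (-720/7 : ℝ))).add ((hasDerivAt_pow 3 (2 / 3 : ℝ)).const_mul (324/7 : ℝ))).add ((hasDerivAt_pow 4 (2 / 3 : ℝ)).const_mul (0 : ℝ))).add ((hasDerivAt_pow 5 (2 / 3 : ℝ)).const_mul (0 : ℝ)))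
    rw [e]; refine hD.deriv.trans ?_
    norm_num
  have dSc' : deriv (fun c => StPoly (2 / 3) (2 / 3) c) (1) = (8 : ℝ) := by
    have e : (fun c => StPoly (2 / 3) (2 / 3) c : ℝ → ℝ) = fun t : ℝ => (-4 : ℝ) + (0 : ℝ) * t ^ 1 + (4 : ℝ) * t ^ 2 + (0 : ℝ) * t ^ 3 + (0 : ℝ) * t ^ 4 + (0 : ℝ) * t ^ 5 := by
      funext t; unfold StPoly; ring
    have hD := ((((((hasDerivAt_const (1 : ℝ) (-4 : ℝ)).add ((hasDerivAt_pow 1 (1 : ℝ)).const_mul (0 : ℝ))).add ((hasDerivAt_pow 2 (1 : ℝ)).const_mul (4 : ℝ))).add ((hasDerivAt_pow 3 (1 : ℝ)).const_mul (0 : ℝ))).add ((hasDerivAt_pow 4 (1 : ℝ)).const_mul (0 : ℝ))).add ((hasDerivAt_pow 5 (1 : ℝ)).const_mul (0 : ℝ)))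
    rw [e]; refine hD.deriv.trans ?_
    norm_num
  have dShp : deriv (fun hp => St (2 / 3 : ℝ) hp 1) (2 / 3) = (-60/7 : ℝ) := by
    rw [eShp]; exact dShp'
  have dSc : deriv (fun c => St (2 / 3 : ℝ) (2 / 3) c) 1 = (8 : ℝ) := by
    rw [eSc]; exact dSc'
  have dSh : deriv (fun h => St h (2 / 3 : ℝ) 1) (2 / 3) = (24/7 : ℝ) := by
    rw [eSh.deriv_eq]; exact dSh'
  refine ⟨?_, ?_, ?_, ?_, ?_, ?_, ?_, ?_⟩
  · unfold Pfun; norm_num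
  · rw [key (2/3) (by norm_num) (by norm_num) (2/3) 1]
    unfold StPoly; norm_num
  · rw [dPh, dShp, dPhp, dSh]; norm_num
  · rw [dPh, dPhp, dSc, dPc, dSh, dShp]; norm_num
  · norm_num
  · norm_num
  · intro a b
    rw [dPhp, dPc, dPh, dShp, dSc, dSh]
    constructor
    · rintro ⟨e1, e2⟩
      constructor <;> linarith
    · rintro ⟨rfl, rfl⟩
      norm_num
  · intro hplus cc hdp hdc h0 c0 hev
    have H1 : HasDerivAt hplus (deriv hplus 0) 0 := hdp.hasDerivAt
    have H2 : HasDerivAt cc (deriv cc 0) 0 := hdc.hasDerivAt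
    have He : HasDerivAt (fun ε : ℝ => (2/3 : ℝ) + ε) 1 0 := by
      simpa using (hasDerivAt_id (0:ℝ)).const_add (2/3:ℝ)
    -- derivative of the Pfun composite
    have HDP : HasDerivAt (fun ε : ℝ => Pfun (1 / 28) (-18) (2 / 3 + ε) (hplus ε) (cc ε))
        ((-16/21 : ℝ) + (64/63 : ℝ) * deriv cc 0) 0 := by
      have hfun : (fun ε : ℝ => (4 : ℝ) * (((2/3 : ℝ) + ε) ^ 0 * (hplus ε ^ 1 * cc ε ^ 2)) + (-54/7 : ℝ) * (((2/3 : ℝ) + ε) ^ 0 * (hplus ε ^ 2 * cc ε ^ 0)) + (-36/7 : ℝ) * (((2/3 : ℝ) + ε) ^ 0 * (hplus ε ^ 2 * cc ε ^ 1)) + (-54/7 : ℝ) * (((2/3 : ℝ) + ε) ^ 0 * (hplus ε ^ 2 * cc ε ^ 2)) + (432/7 : ℝ) * (((2/3 : ℝ) + ε) ^ 0 * (hplus ε ^ 3 * cc ε ^ 0)) + (18/7 : ℝ) * (((2/3 : ℝ) + ε) ^ 0 * (hplus ε ^ 3 * cc ε ^ 1)) + (27/7 : ℝ) * (((2/3 :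 ℝ) + ε) ^ 0 * (hplus ε ^ 3 * cc ε ^ 2)) + (-54 : ℝ) * (((2/3 : ℝ) + ε) ^ 0 * (hplus ε ^ 4 * cc ε ^ 0)) + (81/7 : ℝ) * (((2/3 : ℝ) + ε) ^ 0 * (hplus ε ^ 5 * cc ε ^ 0)) + (4 : ℝ) * (((2/3 : ℝ) + ε) ^ 1 * (hplus ε ^ 0 * cc ε ^ 2)) + (-8 : ℝ) * (((2/3 : ℝ) + ε) ^ 1 * (hplus ε ^ 1 * cc ε ^ 2)) + (-324/7 : ℝ) * (((2/3 : ℝ) + ε) ^ 1 * (hplus ε ^ 2 * cc ε ^ 0)) + (54/7 : ℝ) * (((2/3 : ℝ) + ε) ^ 1 * (hplus ε ^ 2 * cc ε ^ 1)) + (27/7 : ℝ) * (((2/3 : ℝ) + ε) ^ 1 * (hplus ε ^ 2 * cc ε ^ 2)) + (-18/7 : ℝ) * (((2/3 : ℝ) + ε) ^ 1 * (hplus ε ^ 3 * cc ε ^ 1)) + (81/7 : ℝ) * (((2/3 : ℝ) + ε) ^ 1 * (hplus ε ^ 4 * cc ε ^ 0)) + (324/7 : ℝ) * (((2/3 : ℝ)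 + ε) ^ 2 * (hplus ε ^ 2 * cc ε ^ 0)) + (-18/7 : ℝ) * (((2/3 : ℝ) + ε) ^ 2 * (hplus ε ^ 2 * cc ε ^ 1)) + (-81/7 : ℝ) * (((2/3 : ℝ) + ε) ^ 2 * (hplus ε ^ 3 * cc ε ^ 0)) + (-81/7 : ℝ) * (((2/3 : ℝ) + ε) ^ 3 * (hplus ε ^ 2 * cc ε ^ 0)))
          = (fun ε : ℝ => Pfun (1 / 28) (-18) (2 / 3 + ε) (hplus ε) (cc ε)) := by
        funext ε; unfold Pfun; ring
      rw [← hfun]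
      have HD := ((((((((((((((((((((((He.pow 0).mul ((H1.pow 1).mul (H2.pow 2))).const_mul (4 : ℝ)).add (((He.pow 0).mul ((H1.pow 2).mul (H2.pow 0))).const_mul (-54/7 : ℝ))).add (((He.pow 0).mul ((H1.pow 2).mul (H2.pow 1))).const_mul (-36/7 : ℝ))).add (((He.pow 0).mul ((H1.pow 2).mul (H2.pow 2))).const_mul (-54/7 : ℝ))).add (((He.pow 0).mul ((H1.pow 3).mul (H2.pow 0))).const_mul (432/7 : ℝ))).add (((He.pow 0).mul ((H1.pow 3).mul (H2.pow 1))).const_mul (18/7 : ℝ))).add (((He.pow 0).mul ((H1.pow 3).mul (H2.pow 2))).const_mul (27/7 : ℝ))).add (((He.pow 0).mul ((H1.pow 4).mul (H2.pow 0))).const_mul (-54 : ℝ))).add (((He.pow 0).mul ((H1.pow 5).mul (H2.pow 0))).const_mul (81/7 : ℝ))).add (((He.pow 1).mul ((H1.pow 0).mul (H2.pow 2))).const_mul (4 : ℝ))).add (((He.pow 1).mul ((H1.pow 1).mul (H2.pow 2))).const_mul (-8 : ℝ))).add (((He.pow 1).mul ((H1.pow 2).mul (H2.pow 0))).const_mul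 (-324/7 : ℝ))).add (((He.pow 1).mul ((H1.pow 2).mul (H2.pow 1))).const_mul (54/7 : ℝ))).add (((He.pow 1).mul ((H1.pow 2).mul (H2.pow 2))).const_mul (27/7 : ℝ))).add (((He.pow 1).mul ((H1.pow 3).mul (H2.pow 1))).const_mul (-18/7 : ℝ))).add (((He.pow 1).mul ((H1.pow 4).mul (H2.pow 0))).const_mul (81/7 : ℝ))).add (((He.pow 2).mul ((H1.pow 2).mul (H2.pow 0))).const_mul (324/7 : ℝ))).add (((He.pow 2).mul ((H1.pow 2).mul (H2.pow 1))).const_mul (-18/7 : ℝ))).add (((He.pow 2).mul ((H1.pow 3).mul (H2.pow 0))).const_mul (-81/7 : ℝ))).add (((He.pow 3).mul ((H1.pow 2).mul (H2.pow 0))).const_mul (-81/7 : ℝ)))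
      refine HD.congr_deriv ?_
      simp only [Pi.pow_apply, Pi.mul_apply, Pi.one_apply, Pi.add_apply, h0, c0]
      push_cast
      ring
    have HDS : HasDerivAt (fun ε : ℝ => StPoly (2 / 3 + ε) (hplus ε) (cc ε))
        ((24/7 : ℝ) + (-60/7 : ℝ) * deriv hplus 0 + (8 : ℝ) * deriv cc 0) 0 := by
      have hfun : (fun ε : ℝ => (-12 : ℝ) * (((2/3 : ℝ) + ε) ^ 0 * (hplus ε ^ 0 * cc ε ^ 2)) + (162/7 : ℝ) * (((2/3 : ℝ) + ε) ^ 0 * (hplus ε ^ 1 * cc ε ^ 0)) + (108/7 : ℝ) * (((2/3 : ℝ) + ε) ^ 0 * (hplus ε ^ 1 * cc ε ^ 1)) + (162/7 : ℝ) * (((2/3 : ℝ) + ε) ^ 0 * (hplus ε ^ 1 * cc ε ^ 2)) + (-1296/7 : ℝ) * (((2/3 : ℝ) + ε) ^ 0 * (hplus ε ^ 2 * cc ε ^ 0)) + (-54/7 : ℝ) * (((2/3 : ℝ) + ε) ^ 0 * (hplus ε ^ 2 * cc ε ^ 1)) + (-81/7 : ℝ) * (((2/3 : ℝ) + ε) ^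 0 * (hplus ε ^ 2 * cc ε ^ 2)) + (162 : ℝ) * (((2/3 : ℝ) + ε) ^ 0 * (hplus ε ^ 3 * cc ε ^ 0)) + (-243/7 : ℝ) * (((2/3 : ℝ) + ε) ^ 0 * (hplus ε ^ 4 * cc ε ^ 0)) + (24 : ℝ) * (((2/3 : ℝ) + ε) ^ 1 * (hplus ε ^ 0 * cc ε ^ 2)) + (486/7 : ℝ) * (((2/3 : ℝ) + ε) ^ 1 * (hplus ε ^ 1 * cc ε ^ 0)) + (-216/7 : ℝ) * (((2/3 : ℝ) + ε) ^ 1 * (hplus ε ^ 1 * cc ε ^ 1)) + (-162/7 : ℝ) * (((2/3 : ℝ) + ε) ^ 1 * (hplus ε ^ 1 * cc ε ^ 2)) + (972/7 : ℝ) * (((2/3 : ℝ) + ε) ^ 1 * (hplus ε ^ 2 * cc ε ^ 0)) + (54/7 : ℝ) * (((2/3 : ℝ) + ε) ^ 1 * (hplus ε ^ 2 * cc ε ^ 1)) + (-486/7 : ℝ) * (((2/3 : ℝ) + ε) ^ 1 * (hplus ε ^ 3 * cc ε ^ 0)) + (-162 : ℝ) * (((2/3 : ℝ) + ε) ^ 2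 * (hplus ε ^ 1 * cc ε ^ 0)) + (108/7 : ℝ) * (((2/3 : ℝ) + ε) ^ 2 * (hplus ε ^ 1 * cc ε ^ 1)) + (-81/7 : ℝ) * (((2/3 : ℝ) + ε) ^ 2 * (hplus ε ^ 2 * cc ε ^ 0)) + (486/7 : ℝ) * (((2/3 : ℝ) + ε) ^ 3 * (hplus ε ^ 1 * cc ε ^ 0)))
          = (fun ε : ℝ => StPoly (2 / 3 + ε) (hplus ε) (cc ε)) := by
        funext ε; unfold StPoly; ring
      rw [← hfun]
      have HD := ((((((((((((((((((((((He.pow 0).mul ((H1.pow 0).mul (H2.pow 2))).const_mul (-12 : ℝ)).add (((He.pow 0).mul ((H1.pow 1).mul (H2.pow 0))).const_mul (162/7 : ℝ))).add (((He.pow 0).mul ((H1.pow 1).mul (H2.pow 1))).const_mul (108/7 : ℝ))).add (((He.pow 0).mul ((H1.pow 1).mul (H2.pow 2))).const_mul (162/7 : ℝ))).add (((He.pow 0).mul ((H1.pow 2).mul (H2.pow 0))).const_mul (-1296/7 : ℝ))).add (((He.pow 0).mul ((H1.pow 2).mul (H2.pow 1))).const_mul (-54/7 : ℝ))).add (((He.pow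 0).mul ((H1.pow 2).mul (H2.pow 2))).const_mul (-81/7 : ℝ))).add (((He.pow 0).mul ((H1.pow 3).mul (H2.pow 0))).const_mul (162 : ℝ))).add (((He.pow 0).mul ((H1.pow 4).mul (H2.pow 0))).const_mul (-243/7 : ℝ))).add (((He.pow 1).mul ((H1.pow 0).mul (H2.pow 2))).const_mul (24 : ℝ))).add (((He.pow 1).mul ((H1.pow 1).mul (H2.pow 0))).const_mul (486/7 : ℝ))).add (((He.pow 1).mul ((H1.pow 1).mul (H2.pow 1))).const_mul (-216/7 : ℝ))).add (((He.pow 1).mul ((H1.pow 1).mul (H2.pow 2))).const_mul (-162/7 : ℝ))).add (((He.pow 1).mul ((H1.pow 2).mul (H2.pow 0))).const_mul (972/7 : ℝ))).add (((He.pow 1).mul ((H1.pow 2).mul (H2.pow 1))).const_mul (54/7 : ℝ))).add (((He.pow 1).mul ((H1.pow 3).mul (H2.pow 0))).const_mul (-486/7 : ℝ))).add (((He.pow 2).mul ((H1.pow 1).mul (H2.pow 0))).const_mul (-162 : ℝ))).add (((He.pow 2).mul ((H1.pow 1).mul (H2.pow 1))).const_mul (108/7 : ℝ))).add (((He.pow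 2).mul ((H1.pow 2).mul (H2.pow 0))).const_mul (-81/7 : ℝ))).add (((He.pow 3).mul ((H1.pow 1).mul (H2.pow 0))).const_mul (486/7 : ℝ)))
      refine HD.congr_deriv ?_
      simp only [Pi.pow_apply, Pi.mul_apply, Pi.one_apply, Pi.add_apply, h0, c0]
      push_cast
      ring
    -- both composites vanish near 0
    have hball : ∀ᶠ ε in nhds (0:ℝ), ε ∈ Ioo (-(2/3) : ℝ) (1/3) :=
      Ioo_mem_nhds (by norm_num) (by norm_num)
    have hPz : HasDerivAt (fun ε : ℝ => Pfun (1 / 28) (-18) (2 / 3 + ε) (hplus ε) (cc ε)) 0 0 := by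
      refine (hasDerivAt_const (0:ℝ) (0:ℝ)).congr_of_eventuallyEq ?_
      filter_upwards [hev] with ε h
      exact h.1
    have hSz : HasDerivAt (fun ε : ℝ => StPoly (2 / 3 + ε) (hplus ε) (cc ε)) 0 0 := by
      refine (hasDerivAt_const (0:ℝ) (0:ℝ)).congr_of_eventuallyEq ?_
      filter_upwards [hev, hball] with ε h hb
      rw [← key (2/3 + ε) (by linarith [hb.1]) (by linarith [hb.2]) (hplus ε) (cc ε)]
      exact h.2
    have eq1 := HDP.unique hPz
    have eq2 := HDS.unique hSz
    constructor <;> linarith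
end

section
/- Suppose u : ℝ × [−π/2, π/2] → ℝ is twice continuously differentiable and satisfies u_{xx} + u_{yy} + u = 0 on ℝ × (−π/2, π/2), u(x, ±π/2) = 0 for all x ∈ ℝ, and the growth bound |u(x,y)| ≤ C·e^{μ|x|} for some constants C > 0 and 0 ≤ μ < √3 and all (x,y). Then there exist A, B ∈ ℝ such that u(x,y) = (A + Bx)·cos y for all (x,y) ∈ ℝ × [−π/2, π/2]. -/
open Real Set

/-- Partial derivative in the first (axial) variable. -/
noncomputable def pdx (u : ℝ × ℝ → ℝ) (p : ℝ × ℝ) : ℝ :=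
  deriv (fun t => u (t, p.2)) p.1

/-- Partial derivative in the second (transversal) variable. -/
noncomputable def pdy (u : ℝ × ℝ → ℝ) (p : ℝ × ℝ) : ℝ :=
  deriv (fun t => u (p.1, t)) p.2

open Filter MeasureTheory intervalIntegral

/-- One-sided barrier estimate. -/
lemma ode_le_zero (f f' : ℝ → ℝ) (k C μ : ℝ) (hk : 0 < k) (hμ0 : 0 ≤ μ) (hμk : μ < k)
    (hf : ∀ x, HasDerivAt f (f' x) x) (hf' : ∀ x, HasDerivAt f' (k ^ 2 * f x) x)
    (hb : ∀ x, f x ≤ C * Real.exp (μ * |x|)) : ∀ x, f x ≤ 0 := by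
  -- first: for every ε > 0, f x ≤ ε * cosh (k x)
  have key : ∀ ε > 0, ∀ x, f x ≤ ε * Real.cosh (k * x) := by
    intro ε hε
    set g : ℝ → ℝ := fun x => f x - ε * Real.cosh (k * x) with hg
    set g' : ℝ → ℝ := fun x => f' x - ε * (k * Real.sinh (k * x)) with hg'
    have hgd : ∀ x, HasDerivAt g (g' x) x := by
      intro x
      have h1 : HasDerivAt (fun x => ε * Real.cosh (k * x))
          (ε * (Real.sinh (k * x) * (k * 1))) x :=
        (((hasDerivAt_id x).const_mul k).cosh).const_mul ε
      have := (hf x).sub h1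
      refine HasDerivAt.congr_deriv this ?_
      simp only [hg']
      ring
    have hgd' : ∀ x, HasDerivAt g' (k ^ 2 * g x) x := by
      intro x
      have h1 : HasDerivAt (fun x => ε * (k * Real.sinh (k * x)))
          (ε * (k * (Real.cosh (k * x) * k))) x := by
        have := ((((hasDerivAt_id x).const_mul k).sinh).const_mul k).const_mul ε
        refine HasDerivAt.congr_deriv this ?_
        simp only [id_eq]
        ring
      have := (hf' x).sub h1
      refine HasDerivAt.congr_deriv this ?_
      simp only [hg]
      ring
    -- far field: choose R
    obtain ⟨R, hR0, hRbig⟩ : ∃ R : ℝ, 0 < R ∧ C + |g 0| + 1 ≤ ε / 2 * Real.exp ((k - μ) * R) := by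
      rcases exists_nat_gt ((Real.log ((C + |g 0| + 1) / (ε/2))) / (k - μ)) with ⟨N, hN⟩
      refine ⟨N + 1, by positivity, ?_⟩
      have hkμ : 0 < k - μ := by linarith
      have h1 : Real.log ((C + |g 0| + 1) / (ε/2)) ≤ (k - μ) * (N + 1) := by
        have : (Real.log ((C + |g 0| + 1) / (ε/2))) / (k - μ) ≤ (N:ℝ) + 1 := by
          have := hN.le; linarith
        calc Real.log ((C + |g 0| + 1) / (ε/2)) 
            = (Real.log ((C + |g 0| + 1) / (ε/2)) / (k - μ)) * (k - μ) := by
              field_simp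
          _ ≤ ((N:ℝ)+1) * (k - μ) := by nlinarith
          _ = (k - μ) * (N + 1) := by ring
      have h2 : (C + |g 0| + 1) / (ε/2) ≤ Real.exp ((k - μ) * (N+1)) := by
        calc (C + |g 0| + 1) / (ε/2) ≤ Real.exp (Real.log ((C + |g 0| + 1)/(ε/2))) := by
              rcases le_or_gt ((C + |g 0| + 1) / (ε/2)) 0 with h | h
              · exact h.trans (Real.exp_pos _).le
              · exact (Real.exp_log h).ge
          _ ≤ Real.exp ((k - μ) * (N+1)) := Real.exp_le_exp.2 h1
      calc C + |g 0| + 1 = ((C + |g 0| + 1) / (ε/2)) * (ε/2) := by field_simp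
        _ ≤ Real.exp ((k - μ) * (N+1)) * (ε/2) := by nlinarith [Real.exp_pos ((k-μ)*(N+1))]
        _ = ε / 2 * Real.exp ((k - μ) * (N+1)) := by ring
    -- outside [-R, R], g < g 0
    have hout : ∀ x : ℝ, R ≤ |x| → g x < g 0 := by
      intro x hx
      have hcosh : ε / 2 * Real.exp (k * |x|) ≤ ε * Real.cosh (k * x) := by
        have h1 : Real.exp (k * |x|) ≤ 2 * Real.cosh (k * x) := by
          rw [Real.cosh_eq]
          rcases abs_cases x with ⟨h, _⟩ | ⟨h, _⟩
          · rw [h]; nlinarith [Real.exp_pos (-(k*x))]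
          · rw [h]; rw [show k * -x = -(k*x) by ring]; nlinarith [Real.exp_pos (k*x)]
        nlinarith
      have hexp : C * Real.exp (μ * |x|) + (|g 0| + 1) * Real.exp (μ * |x|)
          ≤ ε/2 * Real.exp (k * |x|) := by
        have : (C + |g 0| + 1) * Real.exp (μ * |x|) ≤ ε/2 * (Real.exp ((k-μ)*R) * Real.exp (μ * |x|)) := by
          nlinarith [Real.exp_pos (μ * |x|)]
        have h2 : Real.exp ((k-μ)*R) * Real.exp (μ*|x|) ≤ Real.exp (k * |x|) := by
          rw [← Real.exp_add, Real.exp_le_exp]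
          have hkμ : 0 < k - μ := by linarith
          nlinarith [abs_nonneg x]
        nlinarith [Real.exp_pos ((k-μ)*R), Real.exp_pos (μ*|x|)]
      have h1 : 1 ≤ Real.exp (μ * |x|) := by
        rw [Real.one_le_exp_iff]; positivity
      have := hb x
      have : g x ≤ C * Real.exp (μ*|x|) - ε * Real.cosh (k*x) := by
        simp only [hg]; linarith
      have hfin : g x ≤ -(|g 0| + 1) * Real.exp (μ * |x|) := by linarith
      have : -(|g 0| + 1) * Real.exp (μ*|x|) ≤ -(|g 0| + 1) := by
        nlinarith [mul_le_mul_of_nonneg_left h1 (by positivity : (0:ℝ) ≤ |g 0| + 1)]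
      have := neg_abs_le (g 0)
      linarith
    -- maximum on [-R,R]
    obtain ⟨x₀, hx₀mem, hx₀max⟩ : ∃ x₀ ∈ Icc (-R) R, ∀ x ∈ Icc (-R) R, g x ≤ g x₀ := by
      have hc : ContinuousOn g (Icc (-R) R) := fun x _ => ((hgd x).continuousAt).continuousWithinAt
      obtain ⟨x₀, hmem, hmax⟩ := isCompact_Icc.exists_isMaxOn
        (nonempty_Icc.2 (by linarith)) hc
      exact ⟨x₀, hmem, fun x hx => hmax hx⟩
    have hglobal : ∀ x, g x ≤ g x₀ := by
      intro x
      rcases le_or_gt (|x|) R with h | h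
      · exact hx₀max x (abs_le.1 h)
      · have h0R : (0:ℝ) ∈ Icc (-R) R := by constructor <;> linarith
        exact le_of_lt (lt_of_lt_of_le (hout x h.le) (hx₀max 0 h0R))
    -- if g x₀ > 0 we derive a contradiction
    have hneg : g x₀ ≤ 0 := by
      by_contra hpos
      push_neg at hpos
      have hloc : IsLocalMax g x₀ := Filter.Eventually.of_forall hglobal
      have hder0 : g' x₀ = 0 := hloc.hasDerivAt_eq_zero (hgd x₀)
      have hc : 0 < k ^ 2 * g x₀ := by positivity
      -- slope of g' tends to k² g x₀ > 0
      have hslope := hasDerivAt_iff_tendsto_slope.1 (hgd' x₀)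
      have hev : ∀ᶠ t in nhdsWithin x₀ (Ioi x₀), 0 < slope g' x₀ t := by
        have h2 : ∀ᶠ t in nhdsWithin x₀ {x₀}ᶜ, 0 < slope g' x₀ t :=
          hslope.eventually (eventually_gt_nhds hc)
        exact h2.filter_mono (nhdsWithin_mono _ (fun t ht => ne_of_gt ht))
      obtain ⟨b, hb', hsub⟩ := (mem_nhdsGT_iff_exists_Ioo_subset).1 hev
      have hb'' : x₀ < b := hb'
      have hgpos : ∀ t ∈ Ioo x₀ b, 0 < g' t := by
        intro t ht
        have hs := hsub ht
        have hslope_eq : slope g' x₀ t = g' t / (t - x₀) := by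
          rw [slope_def_field, hder0]; ring_nf
        simp only [mem_setOf_eq] at hs
        rw [hslope_eq] at hs
        have htx : 0 < t - x₀ := by linarith [ht.1]
        by_contra hle
        push_neg at hle
        have : g' t / (t - x₀) ≤ 0 := div_nonpos_of_nonpos_of_nonneg hle htx.le
        linarith
      set m := (x₀ + b) / 2 with hm
      have hx₀m : x₀ < m := by simp only [hm]; linarith
      have hmono : StrictMonoOn g (Icc x₀ m) := by
        apply strictMonoOn_of_deriv_pos (convex_Icc _ _)
        · exact fun t _ => ((hgd t).continuousAt).continuousWithinAt
        · intro t ht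
          rw [interior_Icc] at ht
          rw [(hgd t).deriv]
          exact hgpos t ⟨ht.1, by simp only [hm] at ht ⊢; linarith [ht.2]⟩
      have : g x₀ < g m := hmono (left_mem_Icc.2 hx₀m.le) (right_mem_Icc.2 hx₀m.le) hx₀m
      linarith [hglobal m]
    intro x
    have h1 := hglobal x
    simp only [hg] at h1 hneg
    linarith
  intro x
  by_contra hpos
  push_neg at hpos
  have hcosh : 0 < Real.cosh (k * x) := Real.cosh_pos _
  have hε : 0 < f x / (2 * Real.cosh (k * x)) := by positivity
  have hkey := key _ hε x
  have h2 : f x / (2 * Real.cosh (k*x)) * Real.cosh (k*x) = f x / 2 := by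
    field_simp
  rw [h2] at hkey
  linarith

lemma ode_zero (f f' : ℝ → ℝ) (k C μ : ℝ) (hk : 0 < k) (hμ0 : 0 ≤ μ) (hμk : μ < k)
    (hf : ∀ x, HasDerivAt f (f' x) x) (hf' : ∀ x, HasDerivAt f' (k ^ 2 * f x) x)
    (hb : ∀ x, |f x| ≤ C * Real.exp (μ * |x|)) : ∀ x, f x = 0 := by
  have h1 : ∀ x, f x ≤ 0 := by
    apply ode_le_zero f f' k C μ hk hμ0 hμk hf hf'
    intro x; exact (le_abs_self _).trans (hb x)
  have h2 : ∀ x, -f x ≤ 0 := by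
    apply ode_le_zero (fun x => -f x) (fun x => -f' x) k C μ hk hμ0 hμk
      (fun x => (hf x).neg)
      (fun x => (hf' x).neg.congr_deriv (by beta_reduce; ring))
    intro x
    exact (neg_le_abs _).trans (hb x)
  intro x; linarith [h1 x, h2 x]

lemma sine_complete (g : ℝ → ℝ) (hg : ContinuousOn g (Icc (-(π/2)) (π/2)))
    (hga : g (-(π/2)) = 0) (hgb : g (π/2) = 0)
    (horth : ∀ n : ℕ, 1 ≤ n →
      (∫ y in (-(π/2))..(π/2), g y * Real.sin (n * (y + π/2))) = 0) :
    ∀ y ∈ Icc (-(π/2)) (π/2), g y = 0 := by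
  have hπ : 0 < π := Real.pi_pos
  -- clamped extension
  set G : ℝ → ℝ := fun y => g (max (-(π/2)) (min (π/2) y)) with hG
  have hclamp_mem : ∀ y, max (-(π/2)) (min (π/2) y) ∈ Icc (-(π/2)) (π/2) := by
    intro y
    constructor
    · exact le_max_left _ _
    · exact max_le (by linarith) (min_le_left _ _)
  have hGc : Continuous G := by
    apply hg.comp_continuous
    · exact continuous_const.max (continuous_const.min continuous_id)
    · exact hclamp_mem
  have hGeq : ∀ y ∈ Icc (-(π/2)) (π/2), G y = g y := by
    intro y hy
    simp only [hG]
    rw [min_eq_right hy.2, max_eq_right hy.1]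
  have hGleft : ∀ y : ℝ, y ≤ -(π/2) → G y = 0 := by
    intro y hy
    simp only [hG]
    rw [min_eq_right (by linarith), max_eq_left hy, hga]
  have hGright : ∀ y : ℝ, π/2 ≤ y → G y = 0 := by
    intro y hy
    simp only [hG]
    rw [min_eq_left hy, max_eq_right (by linarith), hgb]
  -- orthogonality for all integers
  have horthZ : ∀ n : ℤ, (∫ y in (-(π/2))..(π/2), G y * Real.sin (n * (y + π/2))) = 0 := by
    have hcongr : ∀ c : ℝ, (∫ y in (-(π/2))..(π/2), G y * Real.sin (c * (y + π/2)))
        = ∫ y in (-(π/2))..(π/2), g y * Real.sin (c * (y + π/2)) := by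
      intro c
      apply intervalIntegral.integral_congr
      intro y hy
      rw [uIcc_of_le (by linarith)] at hy
      simp only [hGeq y hy]
    intro n
    rcases n with m | m
    · rw [hcongr]
      rcases Nat.eq_zero_or_pos m with h | h
      · subst h
        simp
      · have hc : ((Int.ofNat m : ℤ) : ℝ) = ((m : ℕ) : ℝ) := by simp
        rw [hc]
        exact horth m h
    · rw [hcongr]
      have hc : ((Int.negSucc m : ℤ) : ℝ) = -(((m + 1 : ℕ)) : ℝ) := by
        push_cast [Int.cast_negSucc]
        ring
      rw [hc]
      have h1 := horth (m + 1) (by omega)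
      rw [← neg_eq_zero, ← intervalIntegral.integral_neg, ← h1]
      apply intervalIntegral.integral_congr
      intro y _
      simp only
      rw [show (-(((m + 1 : ℕ)) : ℝ)) * (y + π/2) = -((((m + 1 : ℕ)) : ℝ) * (y + π/2)) by ring,
        Real.sin_neg]
      push_cast
      ring
  -- Fourier setup
  haveI : Fact (0 < 2 * π) := ⟨by positivity⟩
  set fC : ℝ → ℂ := fun z => ((G (z - π/2) - G (-z - π/2) : ℝ) : ℂ) with hfC
  have hfCcont : Continuous fC := by
    apply Complex.continuous_ofReal.comp
    exact (hGc.comp (continuous_id.sub continuous_const)).sub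
      (hGc.comp (continuous_id.neg.sub continuous_const))
  have hfCe : fC (-π) = fC (-π + 2 * π) := by
    simp only [hfC]
    rw [hGleft (-π - π/2) (by linarith), hGright (-(-π) - π/2) (by linarith),
      hGright (-π + 2*π - π/2) (by linarith), hGleft (-(-π + 2*π) - π/2) (by linarith)]
  set F : C(AddCircle (2*π), ℂ) :=
    ⟨AddCircle.liftIco (2*π) (-π) fC, AddCircle.liftIco_continuous hfCe hfCcont.continuousOn⟩
    with hF
  -- all Fourier coefficients vanish
  have hcoeff : ∀ n : ℤ, fourierCoeff (F : AddCircle (2*π) → ℂ) n = 0 := by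
    intro n
    rw [show (F : AddCircle (2*π) → ℂ) = AddCircle.liftIco (2*π) (-π) fC from rfl]
    rw [fourierCoeff_liftIco_eq]
    rw [fourierCoeffOn_eq_integral]
    rw [show (-π + 2*π - -π : ℝ) = 2*π by ring]
    simp only [smul_eq_mul]
    rw [show (-π + 2*π : ℝ) = π by ring]
    have hint : (∫ x in (-π)..π, (fourier (-n) (x : AddCircle (2*π))) * fC x) = 0 := by
      have hπC : ((π:ℝ):ℂ) ≠ 0 := by exact_mod_cast Real.pi_ne_zero
      have hfour : ∀ x : ℝ, (fourier (-n) (x : AddCircle (2*π)))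
          = Complex.exp (-((n:ℂ) * Complex.I * x)) := by
        intro x
        rw [fourier_coe_apply]
        congr 1
        push_cast
        field_simp
      have hGc1 : Continuous fun x : ℝ => ((G (x - π/2) : ℝ) : ℂ) :=
        Complex.continuous_ofReal.comp (hGc.comp (continuous_id.sub continuous_const))
      have hGc2 : Continuous fun x : ℝ => ((G (-x - π/2) : ℝ) : ℂ) :=
        Complex.continuous_ofReal.comp (hGc.comp (continuous_id.neg.sub continuous_const))
      have hE : ∀ c : ℂ, Continuous fun x : ℝ => Complex.exp (c * x) := by
        intro c
        exact Complex.continuous_exp.comp (continuous_const.mul Complex.continuous_ofReal)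
      have step1 : (∫ x in (-π)..π, (fourier (-n) (x : AddCircle (2*π))) * fC x)
          = (∫ x in (-π)..π, Complex.exp (-((n:ℂ) * Complex.I * x)) * ((G (x - π/2) : ℝ) : ℂ))
            - (∫ x in (-π)..π, Complex.exp (-((n:ℂ) * Complex.I * x)) * ((G (-x - π/2) : ℝ) : ℂ)) := by
        rw [← intervalIntegral.integral_sub]
        · apply intervalIntegral.integral_congr
          intro x _
          simp only [hfour x, hfC]
          push_cast
          ring
        · apply Continuous.intervalIntegrable
          have : (fun x : ℝ => Complex.exp (-((n:ℂ) * Complex.I * x))) = fun x : ℝ =>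
              Complex.exp ((-(n:ℂ) * Complex.I) * x) := by
            funext x; ring_nf
          exact (this ▸ hE (-(n:ℂ) * Complex.I)).mul hGc1
        · apply Continuous.intervalIntegrable
          have : (fun x : ℝ => Complex.exp (-((n:ℂ) * Complex.I * x))) = fun x : ℝ =>
              Complex.exp ((-(n:ℂ) * Complex.I) * x) := by
            funext x; ring_nf
          exact (this ▸ hE (-(n:ℂ) * Complex.I)).mul hGc2
      have step2 : (∫ x in (-π)..π, Complex.exp (-((n:ℂ) * Complex.I * x)) * ((G (-x - π/2) : ℝ) : ℂ))
          = (∫ x in (-π)..π, Complex.exp ((n:ℂ) * Complex.I * x) * ((G (x - π/2) : ℝ) : ℂ)) := by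
        have h := intervalIntegral.integral_comp_neg (a := -π) (b := π)
          (fun x : ℝ => Complex.exp ((n:ℂ) * Complex.I * x) * ((G (x - π/2) : ℝ) : ℂ))
        rw [neg_neg] at h
        rw [← h]
        apply intervalIntegral.integral_congr
        intro x _
        simp only
        push_cast
        ring_nf
      have step3 : (∫ x in (-π)..π, (fourier (-n) (x : AddCircle (2*π))) * fC x)
          = (-2 * Complex.I) * ∫ x in (-π)..π, ((Real.sin (n * x) * G (x - π/2) : ℝ) : ℂ) := by
        rw [step1, step2, ← intervalIntegral.integral_sub, ← intervalIntegral.integral_const_mul]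
        · apply intervalIntegral.integral_congr
          intro x _
          simp only
          have hsin : Complex.exp (-((n:ℂ) * Complex.I * x)) - Complex.exp ((n:ℂ) * Complex.I * x)
              = -2 * Complex.I * Complex.sin ((n:ℂ) * x) := by
            rw [Complex.sin]
            have h1 : -((n:ℂ) * x) * Complex.I = -((n:ℂ) * Complex.I * x) := by ring
            have h2 : ((n:ℂ) * x) * Complex.I = (n:ℂ) * Complex.I * x := by ring
            rw [h1, h2]
            linear_combination (Complex.exp (-((n:ℂ) * Complex.I * x))
              - Complex.exp ((n:ℂ) * Complex.I * x)) * Complex.I_sq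
          push_cast
          linear_combination ((G (x - π/2) : ℝ) : ℂ) * hsin
        · apply Continuous.intervalIntegrable
          have : (fun x : ℝ => Complex.exp (-((n:ℂ) * Complex.I * x))) = fun x : ℝ =>
              Complex.exp ((-(n:ℂ) * Complex.I) * x) := by
            funext x; ring_nf
          exact (this ▸ hE (-(n:ℂ) * Complex.I)).mul hGc1
        · apply Continuous.intervalIntegrable
          have : (fun x : ℝ => Complex.exp ((n:ℂ) * Complex.I * x)) = fun x : ℝ =>
              Complex.exp (((n:ℂ) * Complex.I) * x) := by
            funext x; ring_nf
          exact (this ▸ hE ((n:ℂ) * Complex.I)).mul hGc1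
      rw [step3]
      -- reduce to a real integral
      have hreal : (∫ x in (-π)..π, Real.sin (n * x) * G (x - π/2)) = 0 := by
        have hcont1 : Continuous fun x : ℝ => Real.sin (n * x) * G (x - π/2) :=
          ((Real.continuous_sin.comp (continuous_const.mul continuous_id)).mul
            (hGc.comp (continuous_id.sub continuous_const)))
        have hsplit := intervalIntegral.integral_add_adjacent_intervals
          (a := -π) (b := 0) (c := π) (μ := MeasureTheory.volume)
          (f := fun x : ℝ => Real.sin (n * x) * G (x - π/2))
          (hcont1.intervalIntegrable _ _) (hcont1.intervalIntegrable _ _)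
        have hleft : (∫ x in (-π)..(0:ℝ), Real.sin (n * x) * G (x - π/2)) = 0 := by
          have hzero : EqOn (fun x : ℝ => Real.sin (n * x) * G (x - π/2))
              (fun _ => (0:ℝ)) (uIcc (-π) 0) := by
            intro x hx
            rw [uIcc_of_le (by linarith)] at hx
            simp only
            rw [hGleft (x - π/2) (by linarith [hx.2]), mul_zero]
          rw [intervalIntegral.integral_congr hzero]
          simp
        have hright : (∫ x in (0:ℝ)..π, Real.sin (n * x) * G (x - π/2)) = 0 := by
          have h := intervalIntegral.integral_comp_sub_right (a := (0:ℝ)) (b := π)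
            (f := fun y : ℝ => Real.sin (n * (y + π/2)) * G y) (π/2)
          have heq : (∫ x in (0:ℝ)..π, Real.sin (n * (x - π/2 + π/2)) * G (x - π/2))
              = ∫ x in (0:ℝ)..π, Real.sin (n * x) * G (x - π/2) := by
            apply intervalIntegral.integral_congr
            intro x _
            simp only
            rw [show (x - π/2 + π/2 : ℝ) = x by ring]
          rw [heq] at h
          rw [h, show (0 - π/2 : ℝ) = -(π/2) by ring, show (π - π/2 : ℝ) = π/2 by ring]
          rw [← horthZ n]
          apply intervalIntegral.integral_congr
          intro y _
          simp only
          ring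
        rw [hleft, hright] at hsplit
        linarith [hsplit]
      calc (-2 * Complex.I) * ∫ x in (-π)..π, ((Real.sin (n * x) * G (x - π/2) : ℝ) : ℂ)
          = (-2 * Complex.I) * (((∫ x in (-π)..π, Real.sin (n * x) * G (x - π/2) : ℝ)) : ℂ) := by
            rw [intervalIntegral.integral_ofReal]
        _ = 0 := by rw [hreal]; simp
    rw [hint, smul_zero]
  -- conclude F = 0 pointwise
  have hFzero : ∀ z : AddCircle (2*π), F z = 0 := by
    intro z
    have hsummable : Summable (fourierCoeff (F : AddCircle (2*π) → ℂ)) := by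
      have : fourierCoeff (F : AddCircle (2*π) → ℂ) = fun _ => 0 := funext hcoeff
      rw [this]; exact summable_zero
    have h1 := has_pointwise_sum_fourier_series_of_summable hsummable z
    have h2 : HasSum (fun i => fourierCoeff (F : AddCircle (2*π) → ℂ) i • fourier i z) 0 := by
      have : (fun i => fourierCoeff (F : AddCircle (2*π) → ℂ) i • fourier i z)
          = fun _ => (0:ℂ) := by
        funext i; rw [hcoeff i, zero_smul]
      rw [this]; exact hasSum_zero
    exact (h1.unique h2)
  -- pull back
  intro y hy
  rcases eq_or_lt_of_le hy.2 with h | h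
  · rw [h]; exact hgb
  · have hz : y + π/2 ∈ Ico (-π) (-π + 2*π) := by
      constructor
      · linarith [hy.1]
      · linarith
    have := hFzero ((y + π/2 : ℝ) : AddCircle (2*π))
    rw [show F ((y + π/2 : ℝ) : AddCircle (2*π))
        = AddCircle.liftIco (2*π) (-π) fC ((y + π/2 : ℝ) : AddCircle (2*π)) from rfl] at this
    rw [AddCircle.liftIco_coe_apply hz] at this
    simp only [hfC] at this
    rw [hGleft (-(y + π/2) - π/2) (by linarith [hy.1])] at this
    rw [show (y + π/2 - π/2 : ℝ) = y by ring] at this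
    rw [hGeq y hy] at this
    have : g y - 0 = 0 := by exact_mod_cast this
    linarith

lemma main_core (u U1 U11 U2 U22 : ℝ × ℝ → ℝ) (C μ : ℝ)
    (hC : 0 < C) (hμ0 : 0 ≤ μ) (hμ : μ < Real.sqrt 3)
    (huc : ContinuousOn u (univ ×ˢ Icc (-(π/2)) (π/2)))
    (hU1c : ContinuousOn U1 (univ ×ˢ Icc (-(π/2)) (π/2)))
    (hU11c : ContinuousOn U11 (univ ×ˢ Icc (-(π/2)) (π/2)))
    (hU2c : ContinuousOn U2 (univ ×ˢ Icc (-(π/2)) (π/2)))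
    (hU22c : ContinuousOn U22 (univ ×ˢ Icc (-(π/2)) (π/2)))
    (h1 : ∀ x : ℝ, ∀ y ∈ Icc (-(π/2)) (π/2), HasDerivAt (fun t => u (t, y)) (U1 (x, y)) x)
    (h2 : ∀ x : ℝ, ∀ y ∈ Icc (-(π/2)) (π/2), HasDerivAt (fun t => U1 (t, y)) (U11 (x, y)) x)
    (h3 : ∀ x : ℝ, ∀ y ∈ Icc (-(π/2)) (π/2),
      HasDerivWithinAt (fun t => u (x, t)) (U2 (x, y)) (Icc (-(π/2)) (π/2)) y)
    (h4 : ∀ x : ℝ, ∀ y ∈ Icc (-(π/2)) (π/2),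
      HasDerivWithinAt (fun t => U2 (x, t)) (U22 (x, y)) (Icc (-(π/2)) (π/2)) y)
    (hpde : ∀ x : ℝ, ∀ y ∈ Ioo (-(π/2)) (π/2), U11 (x,y) + U22 (x,y) + u (x,y) = 0)
    (hbc : ∀ x : ℝ, u (x, -(π/2)) = 0 ∧ u (x, π/2) = 0)
    (hgrowth : ∀ x : ℝ, ∀ y ∈ Icc (-(π/2)) (π/2), |u (x,y)| ≤ C * Real.exp (μ * |x|)) :
    ∃ A B : ℝ, ∀ x : ℝ, ∀ y ∈ Icc (-(π/2)) (π/2),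
      u (x, y) = (A + B * x) * Real.cos y := by
  have hπ : 0 < π := Real.pi_pos
  have hab : -(π/2) ≤ (π/2 : ℝ) := by linarith
  -- eigenfunctions
  set e : ℕ → ℝ → ℝ := fun n y => Real.sin (n * (y + π/2)) with hedef
  set e' : ℕ → ℝ → ℝ := fun n y => n * Real.cos (n * (y + π/2)) with he'def
  have he : ∀ (n : ℕ) (y : ℝ), HasDerivAt (e n) (e' n y) y := by
    intro n y
    have := (((hasDerivAt_id' (x := y)).add_const (π/2)).const_mul (n:ℝ)).sin
    convert this using 1
    simp only [he'def]
    ring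
  have he' : ∀ (n : ℕ) (y : ℝ), HasDerivAt (e' n) (-(n:ℝ)^2 * e n y) y := by
    intro n y
    have := ((((hasDerivAt_id' (x := y)).add_const (π/2)).const_mul (n:ℝ)).cos).const_mul (n:ℝ)
    refine HasDerivAt.congr_deriv this ?_
    simp only [hedef]
    ring
  have hea : ∀ n : ℕ, e n (-(π/2)) = 0 := by
    intro n; simp only [hedef]
    rw [show (-(π/2) + π/2 : ℝ) = 0 by ring, mul_zero, Real.sin_zero]
  have heb : ∀ n : ℕ, e n (π/2) = 0 := by
    intro n; simp only [hedef]
    rw [show ((π/2 : ℝ) + π/2) = π by ring, Real.sin_nat_mul_pi]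
  have hebd : ∀ (n : ℕ) (y : ℝ), |e n y| ≤ 1 := fun n y => Real.abs_sin_le_one _
  have hecont : ∀ n : ℕ, Continuous (e n) :=
    fun n => Real.continuous_sin.comp (continuous_const.mul (continuous_id.add continuous_const))
  have he'cont : ∀ n : ℕ, Continuous (e' n) :=
    fun n => continuous_const.mul
      (Real.continuous_cos.comp (continuous_const.mul (continuous_id.add continuous_const)))
  -- continuity of slices
  have hslice : ∀ V : ℝ × ℝ → ℝ, ContinuousOn V (univ ×ˢ Icc (-(π/2)) (π/2)) →
      ∀ x : ℝ, ContinuousOn (fun t => V (x, t)) (Icc (-(π/2)) (π/2)) := by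
    intro V hV x
    exact hV.comp ((continuous_const.prodMk continuous_id).continuousOn)
      (fun t ht => ⟨mem_univ _, ht⟩)
  -- Fourier coefficients
  set aa : ℕ → ℝ → ℝ := fun n x => ∫ y in (-(π/2))..(π/2), u (x, y) * e n y with haadef
  set aa1 : ℕ → ℝ → ℝ := fun n x => ∫ y in (-(π/2))..(π/2), U1 (x, y) * e n y with haa1def
  -- generic differentiation under the integral sign
  have hdiff : ∀ (V W : ℝ × ℝ → ℝ),
      ContinuousOn V (univ ×ˢ Icc (-(π/2)) (π/2)) →
      ContinuousOn W (univ ×ˢ Icc (-(π/2)) (π/2)) →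
      (∀ x : ℝ, ∀ y ∈ Icc (-(π/2)) (π/2), HasDerivAt (fun t => V (t, y)) (W (x, y)) x) →
      ∀ (n : ℕ) (x₀ : ℝ), HasDerivAt (fun x => ∫ y in (-(π/2))..(π/2), V (x, y) * e n y)
        (∫ y in (-(π/2))..(π/2), W (x₀, y) * e n y) x₀ := by
    intro V W hVc hWc hVW n x₀
    -- bound for W on a compact slab
    obtain ⟨M, hM⟩ : ∃ M, ∀ p ∈ Icc (x₀ - 1) (x₀ + 1) ×ˢ Icc (-(π/2)) (π/2), ‖W p‖ ≤ M := by
      apply (isCompact_Icc.prod isCompact_Icc).exists_bound_of_continuousOn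
      exact hWc.mono (fun p hp => ⟨mem_univ _, hp.2⟩)
    have hmeas : ∀ (V' : ℝ × ℝ → ℝ), ContinuousOn V' (univ ×ˢ Icc (-(π/2)) (π/2)) → ∀ x : ℝ,
        AEStronglyMeasurable (fun t => V' (x, t) * e n t)
          (volume.restrict (uIoc (-(π/2)) (π/2))) := by
      intro V' hV' x
      apply ContinuousOn.aestronglyMeasurable _ measurableSet_uIoc
      apply ContinuousOn.mul _ ((hecont n).continuousOn)
      apply (hslice V' hV' x).mono
      rw [uIoc_of_le hab]
      exact Ioc_subset_Icc_self
    have key := intervalIntegral.hasDerivAt_integral_of_dominated_loc_of_deriv_le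
      (F := fun x t => V (x, t) * e n t) (F' := fun x t => W (x, t) * e n t)
      (a := -(π/2)) (b := (π/2)) (μ := volume) (x₀ := x₀)
      (bound := fun _ => M) (s := Metric.ball x₀ 1) (Metric.ball_mem_nhds x₀ one_pos)
      (Filter.Eventually.of_forall (fun x => hmeas V hVc x))
      ((((hslice V hVc x₀).mul (hecont n).continuousOn).mono
        (uIcc_of_le hab).subset).intervalIntegrable)
      (hmeas W hWc x₀)
      (Filter.Eventually.of_forall (fun t ht x hx => by
        have ht' : t ∈ Icc (-(π/2)) (π/2) := by
          rw [uIoc_of_le hab] at ht; exact Ioc_subset_Icc_self ht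
        have hx' : x ∈ Icc (x₀ - 1) (x₀ + 1) := by
          rw [Real.ball_eq_Ioo] at hx
          exact ⟨hx.1.le, hx.2.le⟩
        calc ‖W (x, t) * e n t‖ = ‖W (x, t)‖ * |e n t| := abs_mul _ _
          _ ≤ M * 1 := by
              apply mul_le_mul (hM (x, t) ⟨hx', ht'⟩) (hebd n t) (abs_nonneg _)
              exact (norm_nonneg _).trans (hM (x₀, t) ⟨⟨by linarith, by linarith⟩, ht'⟩)
          _ = M := mul_one M))
      intervalIntegrable_const
      (Filter.Eventually.of_forall (fun t ht x _ => by
        have ht' : t ∈ Icc (-(π/2)) (π/2) := by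
          rw [uIoc_of_le hab] at ht; exact Ioc_subset_Icc_self ht
        exact (hVW x t ht').mul_const (e n t)))
    exact key.2
  have dA : ∀ (n : ℕ) (x : ℝ), HasDerivAt (aa n) (aa1 n x) x := by
    intro n x
    exact hdiff u U1 huc hU1c h1 n x
  have dA1' : ∀ (n : ℕ) (x : ℝ),
      HasDerivAt (aa1 n) (∫ y in (-(π/2))..(π/2), U11 (x, y) * e n y) x := by
    intro n x
    exact hdiff U1 U11 hU1c hU11c h2 n x
  -- integrability helpers
  have hInt : ∀ (V : ℝ × ℝ → ℝ), ContinuousOn V (univ ×ˢ Icc (-(π/2)) (π/2)) →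
      ∀ (x : ℝ) (w : ℝ → ℝ), Continuous w →
      IntervalIntegrable (fun y => V (x, y) * w y) volume (-(π/2)) (π/2) := by
    intro V hV x w hw
    exact (((hslice V hV x).mul hw.continuousOn).mono (uIcc_of_le hab).subset).intervalIntegrable
  -- the key ODE identity ∫ U11 e = (n² - 1) aa n
  have hident : ∀ (n : ℕ) (x : ℝ),
      (∫ y in (-(π/2))..(π/2), U11 (x, y) * e n y) = ((n:ℝ)^2 - 1) * aa n x := by
    intro n x
    -- PDE under the integral (a.e.)
    have hae : (∫ y in (-(π/2))..(π/2), U11 (x, y) * e n y)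
        = ∫ y in (-(π/2))..(π/2), (-(u (x, y)) - U22 (x, y)) * e n y := by
      apply intervalIntegral.integral_congr_ae
      have hbae : ∀ᵐ (y : ℝ), y ≠ (π/2) := by
        rw [MeasureTheory.ae_iff]
        have : {y : ℝ | ¬ y ≠ π/2} = {(π/2 : ℝ)} := by ext z; simp
        rw [this]
        exact Real.volume_singleton
      filter_upwards [hbae] with y hy hmem
      rw [uIoc_of_le hab] at hmem
      have hyo : y ∈ Ioo (-(π/2)) (π/2) := ⟨hmem.1, lt_of_le_of_ne hmem.2 hy⟩
      have := hpde x y hyo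
      have hval : U11 (x, y) = -(u (x,y)) - U22 (x,y) := by linarith
      rw [hval]
    -- first integration by parts
    have hibp1 : (∫ y in (-(π/2))..(π/2), (U22 (x, y) * e n y + U2 (x, y) * e' n y)) = 0 := by
      have := intervalIntegral.integral_eq_sub_of_hasDeriv_right_of_le hab
        (f := fun y => U2 (x, y) * e n y)
        (f' := fun y => U22 (x, y) * e n y + U2 (x, y) * e' n y)
        (((hslice U2 hU2c x).mul (hecont n).continuousOn))
        (fun y hy => by
          have hyI : y ∈ Icc (-(π/2)) (π/2) := Ioo_subset_Icc_self hy
          have hda : HasDerivAt (fun t => U2 (x, t)) (U22 (x, y)) y :=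
            (h4 x y hyI).hasDerivAt (Icc_mem_nhds hy.1 hy.2)
          exact ((hda.mul (he n y))).hasDerivWithinAt)
        (((hInt U22 hU22c x (e n) (hecont n))).add (hInt U2 hU2c x (e' n) (he'cont n)))
      rw [this]
      simp [hea n, heb n]
    -- second integration by parts
    have hibp2 : (∫ y in (-(π/2))..(π/2),
        (U2 (x, y) * e' n y + u (x, y) * (-(n:ℝ)^2 * e n y))) = 0 := by
      have := intervalIntegral.integral_eq_sub_of_hasDeriv_right_of_le hab
        (f := fun y => u (x, y) * e' n y)
        (f' := fun y => U2 (x, y) * e' n y + u (x, y) * (-(n:ℝ)^2 * e n y))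
        (((hslice u huc x).mul (he'cont n).continuousOn))
        (fun y hy => by
          have hyI : y ∈ Icc (-(π/2)) (π/2) := Ioo_subset_Icc_self hy
          have hda : HasDerivAt (fun t => u (x, t)) (U2 (x, y)) y :=
            (h3 x y hyI).hasDerivAt (Icc_mem_nhds hy.1 hy.2)
          exact ((hda.mul (he' n y))).hasDerivWithinAt)
        ((hInt U2 hU2c x (e' n) (he'cont n)).add
          (hInt u huc x (fun y => -(n:ℝ)^2 * e n y) (continuous_const.mul (hecont n))))
      rw [this]
      simp [(hbc x).1, (hbc x).2]
    -- split the two IBP identities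
    have hsplit1 : (∫ y in (-(π/2))..(π/2), U22 (x, y) * e n y)
        = -(∫ y in (-(π/2))..(π/2), U2 (x, y) * e' n y) := by
      have := intervalIntegral.integral_add (hInt U22 hU22c x (e n) (hecont n))
        (hInt U2 hU2c x (e' n) (he'cont n))
      rw [this] at hibp1
      linarith
    have hsplit2 : (∫ y in (-(π/2))..(π/2), U2 (x, y) * e' n y) = (n:ℝ)^2 * aa n x := by
      have h1' := intervalIntegral.integral_add (hInt U2 hU2c x (e' n) (he'cont n))
        (hInt u huc x (fun y => -(n:ℝ)^2 * e n y) (continuous_const.mul (hecont n)))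
      rw [h1'] at hibp2
      have h2' : (∫ y in (-(π/2))..(π/2), u (x, y) * (-(n:ℝ)^2 * e n y))
          = -(n:ℝ)^2 * aa n x := by
        rw [haadef]
        simp only
        rw [← intervalIntegral.integral_const_mul]
        apply intervalIntegral.integral_congr
        intro y _
        ring
      rw [h2'] at hibp2
      linarith
    rw [hae]
    have hsub : (∫ y in (-(π/2))..(π/2), (-(u (x, y)) - U22 (x, y)) * e n y)
        = -(aa n x) - (∫ y in (-(π/2))..(π/2), U22 (x, y) * e n y) := by
      have hc : (∫ y in (-(π/2))..(π/2), (-(u (x, y)) - U22 (x, y)) * e n y)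
          = ∫ y in (-(π/2))..(π/2), -(u (x, y) * e n y + U22 (x, y) * e n y) :=
        intervalIntegral.integral_congr (fun y _ => by ring)
      rw [hc, intervalIntegral.integral_neg,
        intervalIntegral.integral_add (hInt u huc x (e n) (hecont n))
          (hInt U22 hU22c x (e n) (hecont n))]
      simp only [haadef]
      ring
    rw [hsub, hsplit1, hsplit2]
    ring
  have dA1 : ∀ (n : ℕ) (x : ℝ), HasDerivAt (aa1 n) (((n:ℝ)^2 - 1) * aa n x) x := by
    intro n x
    have := dA1' n x
    rwa [hident n x] at this
  -- growth bound on coefficients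
  have habound : ∀ (n : ℕ) (x : ℝ), |aa n x| ≤ (C * π) * Real.exp (μ * |x|) := by
    intro n x
    have hb := intervalIntegral.norm_integral_le_of_norm_le_const
      (C := C * Real.exp (μ * |x|)) (f := fun y => u (x, y) * e n y)
      (a := -(π/2)) (b := (π/2)) ?_
    · rw [haadef]
      simp only
      calc |∫ y in (-(π/2))..(π/2), u (x, y) * e n y|
          ≤ C * Real.exp (μ * |x|) * |(π/2) - (-(π/2))| := hb
        _ = (C * π) * Real.exp (μ * |x|) := by
            rw [show ((π/2 : ℝ) - (-(π/2))) = π by ring, abs_of_nonneg hπ.le]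
            ring
    · intro y hy
      rw [uIoc_of_le hab] at hy
      have hyI : y ∈ Icc (-(π/2)) (π/2) := Ioc_subset_Icc_self hy
      calc ‖u (x, y) * e n y‖ = |u (x, y)| * |e n y| := abs_mul _ _
        _ ≤ (C * Real.exp (μ * |x|)) * 1 :=
            mul_le_mul (hgrowth x y hyI) (hebd n y) (abs_nonneg _)
              (by positivity)
        _ = C * Real.exp (μ * |x|) := mul_one _
  -- higher modes vanish
  have hmodes : ∀ n : ℕ, 2 ≤ n → ∀ x : ℝ, aa n x = 0 := by
    intro n hn x
    have hn3 : (3:ℝ) ≤ (n:ℝ)^2 - 1 := by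
      have : (2:ℝ) ≤ (n:ℝ) := by exact_mod_cast hn
      nlinarith
    set k := Real.sqrt ((n:ℝ)^2 - 1) with hk
    have hkpos : 0 < k := Real.sqrt_pos.2 (by linarith)
    have hksq : k^2 = (n:ℝ)^2 - 1 := Real.sq_sqrt (by linarith)
    have hμk : μ < k := by
      calc μ < Real.sqrt 3 := hμ
        _ ≤ k := Real.sqrt_le_sqrt hn3
    apply ode_zero (aa n) (aa1 n) k (C * π) μ hkpos hμ0 hμk (dA n)
      (fun x => by rw [hksq]; exact dA1 n x)
      (fun x => habound n x)
  -- first mode is affine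
  have hconst : ∀ x : ℝ, aa1 1 x = aa1 1 0 := by
    have hd : ∀ x : ℝ, HasDerivAt (aa1 1) 0 x := by
      intro x
      have := dA1 1 x
      norm_num at this
      exact this
    intro x
    have := is_const_of_deriv_eq_zero (f := aa1 1)
      (fun x => (hd x).differentiableAt) (fun x => (hd x).deriv) x 0
    exact this
  have hlin : ∀ x : ℝ, aa 1 x = aa 1 0 + aa1 1 0 * x := by
    intro x
    set φ : ℝ → ℝ := fun x => aa 1 x - aa 1 0 - aa1 1 0 * x with hφ
    have hdφ : ∀ t : ℝ, HasDerivAt φ 0 t := by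
      intro t
      have h1' := (dA 1 t).sub_const (aa 1 0)
      have h2' := h1'.sub ((hasDerivAt_id' (x := t)).const_mul (aa1 1 0))
      have : aa1 1 t - aa1 1 0 * 1 = 0 := by rw [hconst t]; ring
      rw [this] at h2'
      exact h2'
    have := is_const_of_deriv_eq_zero (f := φ)
      (fun t => (hdφ t).differentiableAt) (fun t => (hdφ t).deriv) x 0
    simp only [hφ] at this
    have h0 : aa 1 0 - aa 1 0 - aa1 1 0 * 0 = 0 := by ring
    rw [h0] at this
    linarith
  -- cos y equals the first eigenfunction
  have hcos_e1 : ∀ y : ℝ, Real.cos y = e 1 y := by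
    intro y
    simp only [hedef, Nat.cast_one, one_mul]
    rw [Real.sin_add_pi_div_two]
  -- orthogonality of cos with higher eigenfunctions
  have horthcos : ∀ m : ℕ, 2 ≤ m →
      (∫ y in (-(π/2))..(π/2), Real.cos y * e m y) = 0 := by
    intro m hm
    set k1 : ℕ := m - 1 with hk1
    set k2 : ℕ := m + 1 with hk2
    have hk1c : ((k1:ℝ)) = (m:ℝ) - 1 := by
      simp only [hk1]
      push_cast [Nat.cast_sub (by omega : 1 ≤ m)]
      ring
    have hk1pos : (0:ℝ) < (m:ℝ) - 1 := by
      have : (2:ℝ) ≤ (m:ℝ) := by exact_mod_cast hm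
      linarith
    have hk2pos : (0:ℝ) < (m:ℝ) + 1 := by positivity
    set Φ : ℝ → ℝ := fun y =>
      (Real.sin (((m:ℝ) - 1) * (y + π/2)) / ((m:ℝ) - 1)
        - Real.sin (((m:ℝ) + 1) * (y + π/2)) / ((m:ℝ) + 1)) / 2 with hΦ
    have hdΦ : ∀ y : ℝ, HasDerivAt Φ (Real.cos y * e m y) y := by
      intro y
      have hd1 : HasDerivAt (fun y => Real.sin (((m:ℝ) - 1) * (y + π/2)))
          (Real.cos (((m:ℝ) - 1) * (y + π/2)) * (((m:ℝ) - 1) * 1)) y :=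
        (((hasDerivAt_id' (x := y)).add_const (π/2)).const_mul ((m:ℝ) - 1)).sin
      have hd2 : HasDerivAt (fun y => Real.sin (((m:ℝ) + 1) * (y + π/2)))
          (Real.cos (((m:ℝ) + 1) * (y + π/2)) * (((m:ℝ) + 1) * 1)) y :=
        (((hasDerivAt_id' (x := y)).add_const (π/2)).const_mul ((m:ℝ) + 1)).sin
      have := (((hd1.div_const ((m:ℝ) - 1)).sub (hd2.div_const ((m:ℝ) + 1))).div_const 2)
      refine HasDerivAt.congr_deriv this ?_
      rw [mul_comm (Real.cos y) (e m y), hcos_e1 y]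
      simp only [hedef, Nat.cast_one, one_mul]
      have hccs := Real.cos_sub_cos (((m:ℝ) - 1) * (y + π/2)) (((m:ℝ) + 1) * (y + π/2))
      have he1 : (((m:ℝ) - 1) * (y + π/2) + ((m:ℝ) + 1) * (y + π/2)) / 2
          = (m:ℝ) * (y + π/2) := by ring
      have he2 : (((m:ℝ) - 1) * (y + π/2) - ((m:ℝ) + 1) * (y + π/2)) / 2
          = -(y + π/2) := by ring
      rw [he1, he2, Real.sin_neg] at hccs
      simp only [Nat.cast_one, one_mul, mul_one]
      rw [mul_div_cancel_right₀ _ (ne_of_gt hk1pos), mul_div_cancel_right₀ _ (ne_of_gt hk2pos)]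
      rw [hccs]
      ring
    have hval := intervalIntegral.integral_eq_sub_of_hasDerivAt
      (a := -(π/2)) (b := (π/2)) (f := Φ) (f' := fun y => Real.cos y * e m y)
      (fun y _ => hdΦ y)
      ((Real.continuous_cos.mul (hecont m)).intervalIntegrable _ _)
    rw [hval]
    have hΦb : Φ (π/2) = 0 := by
      simp only [hΦ]
      rw [show ((π/2 : ℝ) + π/2) = π by ring]
      rw [← hk1c, show ((m:ℝ) + 1) = ((k2:ℕ) : ℝ) by simp [hk2]]
      rw [Real.sin_nat_mul_pi, Real.sin_nat_mul_pi]
      norm_num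
    have hΦa : Φ (-(π/2)) = 0 := by
      simp only [hΦ]
      rw [show (-(π/2 : ℝ) + π/2) = 0 by ring]
      rw [mul_zero, mul_zero, Real.sin_zero]
      ring
    rw [hΦa, hΦb]
    ring
  -- conclusion via completeness
  refine ⟨2/π * aa 1 0, 2/π * aa1 1 0, ?_⟩
  intro x y hy
  set K : ℝ := 2/π * aa 1 0 + 2/π * aa1 1 0 * x with hK
  have hKx : K = 2/π * aa 1 x := by
    rw [hK, hlin x]
    ring
  have happly := sine_complete (fun y => u (x, y) - K * Real.cos y)
    ((hslice u huc x).sub ((continuous_const.mul Real.continuous_cos).continuousOn))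
    (by
      rw [(hbc x).1, Real.cos_neg, Real.cos_pi_div_two]
      ring)
    (by
      rw [(hbc x).2, Real.cos_pi_div_two]
      ring)
    (by
      intro m hm
      have hint : (∫ t in (-(π/2))..(π/2), (u (x, t) - K * Real.cos t) * e m t)
          = aa m x - K * (∫ t in (-(π/2))..(π/2), Real.cos t * e m t) := by
        have hsub : (∫ t in (-(π/2))..(π/2), (u (x, t) - K * Real.cos t) * e m t)
            = ∫ t in (-(π/2))..(π/2), (u (x, t) * e m t - K * (Real.cos t * e m t)) :=
          intervalIntegral.integral_congr (fun t _ => by ring)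
        rw [hsub, intervalIntegral.integral_sub (hInt u huc x (e m) (hecont m))
          (by
            have : Continuous fun t => K * (Real.cos t * e m t) :=
              continuous_const.mul (Real.continuous_cos.mul (hecont m))
            exact this.intervalIntegrable _ _),
          intervalIntegral.integral_const_mul]
      have hgoal : (∫ t in (-(π/2))..(π/2),
          (u (x, t) - K * Real.cos t) * Real.sin ((m:ℝ) * (t + π/2)))
          = ∫ t in (-(π/2))..(π/2), (u (x, t) - K * Real.cos t) * e m t :=
        intervalIntegral.integral_congr (fun t _ => by simp only [hedef])
      rw [hgoal, hint]
      rcases eq_or_lt_of_le hm with h1 | h2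
      · -- m = 1
        rw [← h1]
        have hc2 : (∫ t in (-(π/2))..(π/2), Real.cos t * e 1 t)
            = ∫ t in (-(π/2))..(π/2), Real.cos t ^ 2 := by
          apply intervalIntegral.integral_congr
          intro t _
          simp only
          rw [← hcos_e1 t]
          ring
        rw [hc2, integral_cos_sq]
        rw [Real.cos_pi_div_two, Real.cos_neg, Real.cos_pi_div_two]
        rw [hKx]
        field_simp
        ring
      · -- m ≥ 2
        have hm2 : 2 ≤ m := h2
        rw [horthcos m hm2, hmodes m hm2 x]
        ring)
  have := happly y hy
  rw [hK] at this
  linear_combination this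

/-- Kernel characterization for the linearized anti-plane shear operator `L = Δ + 1`
on the strip `ℝ × [−π/2, π/2]` with Dirichlet conditions: every solution growing
slower than `e^{√3 |x|}` is of the form `(A + Bx) cos y`. -/
theorem antiplane_kernel_characterization (u : ℝ × ℝ → ℝ) (C μ : ℝ)
    (hC : 0 < C) (hμ0 : 0 ≤ μ) (hμ : μ < Real.sqrt 3)
    (hreg : ContDiffOn ℝ 2 u (univ ×ˢ Icc (-(π / 2)) (π / 2)))
    (hpde : ∀ x : ℝ, ∀ y ∈ Ioo (-(π / 2)) (π / 2),
      pdx (pdx u) (x, y) + pdy (pdy u) (x, y) + u (x, y) = 0)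
    (hbc : ∀ x : ℝ, u (x, -(π / 2)) = 0 ∧ u (x, π / 2) = 0)
    (hgrowth : ∀ x : ℝ, ∀ y ∈ Icc (-(π / 2)) (π / 2),
      |u (x, y)| ≤ C * Real.exp (μ * |x|)) :
    ∃ A B : ℝ, ∀ x : ℝ, ∀ y ∈ Icc (-(π / 2)) (π / 2),
      u (x, y) = (A + B * x) * Real.cos y := by
  have hπ : 0 < π := Real.pi_pos
  set S : Set (ℝ × ℝ) := univ ×ˢ Icc (-(π/2)) (π/2) with hS
  have hSu : UniqueDiffOn ℝ S := uniqueDiffOn_univ.prod (uniqueDiffOn_Icc (by linarith))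
  have hmem : ∀ (x : ℝ), ∀ y ∈ Icc (-(π/2)) (π/2), (x, y) ∈ S :=
    fun x y hy => ⟨mem_univ _, hy⟩
  -- first-order partials within S
  set F1 : ℝ × ℝ → (ℝ × ℝ) →L[ℝ] ℝ := fderivWithin ℝ u S with hF1
  have hF1d : ContDiffOn ℝ 1 F1 S := hreg.fderivWithin hSu (by norm_num)
  set U1 : ℝ × ℝ → ℝ := fun p => F1 p (1, 0) with hU1
  set U2 : ℝ × ℝ → ℝ := fun p => F1 p (0, 1) with hU2
  have hU1d : ContDiffOn ℝ 1 U1 S := hF1d.clm_apply contDiffOn_const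
  have hU2d : ContDiffOn ℝ 1 U2 S := hF1d.clm_apply contDiffOn_const
  -- second-order partials within S
  set F11 : ℝ × ℝ → (ℝ × ℝ) →L[ℝ] ℝ := fderivWithin ℝ U1 S with hF11
  set F22 : ℝ × ℝ → (ℝ × ℝ) →L[ℝ] ℝ := fderivWithin ℝ U2 S with hF22
  set U11 : ℝ × ℝ → ℝ := fun p => F11 p (1, 0) with hU11
  set U22 : ℝ × ℝ → ℝ := fun p => F22 p (0, 1) with hU22
  have hU11c : ContinuousOn U11 S :=
    (hU1d.continuousOn_fderivWithin hSu le_rfl).clm_apply continuousOn_const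
  have hU22c : ContinuousOn U22 S :=
    (hU2d.continuousOn_fderivWithin hSu le_rfl).clm_apply continuousOn_const
  -- derivative facts
  have hdu : ∀ p ∈ S, HasFDerivWithinAt u (F1 p) S p :=
    fun p hp => ((hreg.differentiableOn (by norm_num)) p hp).hasFDerivWithinAt
  have hdU1 : ∀ p ∈ S, HasFDerivWithinAt U1 (F11 p) S p :=
    fun p hp => ((hU1d.differentiableOn (by norm_num)) p hp).hasFDerivWithinAt
  have hdU2 : ∀ p ∈ S, HasFDerivWithinAt U2 (F22 p) S p :=
    fun p hp => ((hU2d.differentiableOn (by norm_num)) p hp).hasFDerivWithinAt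
  -- horizontal-line derivatives
  have hline : ∀ (V : ℝ × ℝ → ℝ) (FV : ℝ × ℝ → (ℝ × ℝ) →L[ℝ] ℝ),
      (∀ p ∈ S, HasFDerivWithinAt V (FV p) S p) →
      ∀ (x : ℝ), ∀ y ∈ Icc (-(π/2)) (π/2),
        HasDerivAt (fun t => V (t, y)) (FV (x, y) (1, 0)) x := by
    intro V FV hdV x y hy
    have hγ : HasDerivAt (fun t : ℝ => (t, y)) ((1:ℝ), (0:ℝ)) x :=
      (hasDerivAt_id' (x := x)).prodMk (hasDerivAt_const x y)
    have hmap : MapsTo (fun t : ℝ => (t, y)) univ S := fun t _ => hmem t y hy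
    have := (hdV (x, y) (hmem x y hy)).comp_hasDerivWithinAt x
      (hγ.hasDerivWithinAt (s := univ)) hmap
    rw [hasDerivWithinAt_univ] at this
    exact this
  -- vertical-line derivatives (within Icc)
  have hvert : ∀ (V : ℝ × ℝ → ℝ) (FV : ℝ × ℝ → (ℝ × ℝ) →L[ℝ] ℝ),
      (∀ p ∈ S, HasFDerivWithinAt V (FV p) S p) →
      ∀ (x : ℝ), ∀ y ∈ Icc (-(π/2)) (π/2),
        HasDerivWithinAt (fun t => V (x, t)) (FV (x, y) (0, 1)) (Icc (-(π/2)) (π/2)) y := by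
    intro V FV hdV x y hy
    have hγ : HasDerivAt (fun t : ℝ => (x, t)) ((0:ℝ), (1:ℝ)) y :=
      (hasDerivAt_const y x).prodMk (hasDerivAt_id' (x := y))
    have hmap : MapsTo (fun t : ℝ => (x, t)) (Icc (-(π/2)) (π/2)) S :=
      fun t ht => hmem x t ht
    exact (hdV (x, y) (hmem x y hy)).comp_hasDerivWithinAt y
      (hγ.hasDerivWithinAt (s := Icc (-(π/2)) (π/2))) hmap
  have h1 := hline u F1 hdu
  have h2 := hline U1 F11 hdU1
  have h3 := hvert u F1 hdu
  have h4 := hvert U2 F22 hdU2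
  -- identify pdx/pdy with the U functions
  have hpdx : ∀ (x : ℝ), ∀ y ∈ Icc (-(π/2)) (π/2), pdx u (x, y) = U1 (x, y) :=
    fun x y hy => (h1 x y hy).deriv
  have hpdx2 : ∀ (x : ℝ), ∀ y ∈ Icc (-(π/2)) (π/2), pdx (pdx u) (x, y) = U11 (x, y) := by
    intro x y hy
    have hfun : (fun t => pdx u (t, y)) = fun t => U1 (t, y) :=
      funext (fun t => hpdx t y hy)
    show deriv (fun t => pdx u (t, y)) x = U11 (x, y)
    rw [hfun]
    exact (h2 x y hy).deriv
  have hpdy : ∀ (x : ℝ), ∀ y ∈ Ioo (-(π/2)) (π/2), pdy u (x, y) = U2 (x, y) := by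
    intro x y hy
    exact ((h3 x y (Ioo_subset_Icc_self hy)).hasDerivAt (Icc_mem_nhds hy.1 hy.2)).deriv
  have hpdy2 : ∀ (x : ℝ), ∀ y ∈ Ioo (-(π/2)) (π/2), pdy (pdy u) (x, y) = U22 (x, y) := by
    intro x y hy
    have hev : (fun t => pdy u (x, t)) =ᶠ[nhds y] (fun t => U2 (x, t)) := by
      filter_upwards [Ioo_mem_nhds hy.1 hy.2] with t ht
      exact hpdy x t ht
    show deriv (fun t => pdy u (x, t)) y = U22 (x, y)
    rw [hev.deriv_eq]
    exact ((h4 x y (Ioo_subset_Icc_self hy)).hasDerivAt (Icc_mem_nhds hy.1 hy.2)).deriv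
  -- apply the core result
  apply main_core u U1 U11 U2 U22 C μ hC hμ0 hμ hreg.continuousOn
    hU1d.continuousOn hU11c hU2d.continuousOn hU22c h1 h2 h3 h4 _ hbc hgrowth
  intro x y hy
  have := hpde x y hy
  rw [hpdx2 x y (Ioo_subset_Icc_self hy), hpdy2 x y hy] at this
  linarith
end

section
/- Let η̃ : ℝ → ℝ be continuous with 0 < a ≤ η̃(x) ≤ b < 1 for all x, and set D := {(x,Y) ∈ ℝ² : η̃(x) < Y < 1}. Suppose u is continuous and bounded on the closure of D, twice continuously differentiable with Δu = 0 in D, u ≤ 0 on ∂D, and sup_{η̃(x) ≤ Y ≤ 1} |u(x,Y)| → 0 as |x| → ∞. Then u ≤ 0 throughout D. Moreover, if in addition u(x₀, η̃(x₀)) < 0 for some x₀ ∈ ℝ, then u < 0 at every interior point of D. -/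
open Real Set

open Filter Metric Topology

lemma deriv_nonneg_of_max_left {g : ℝ → ℝ} {x L : ℝ} (hg : HasDerivAt g L x)
    (h : ∀ᶠ t in 𝓝[<] x, g t ≤ g x) : 0 ≤ L := by
  have h1 : Filter.Tendsto (slope g x) (𝓝[<] x) (𝓝 L) :=
    (hasDerivAt_iff_tendsto_slope.1 hg).mono_left
      (nhdsWithin_mono x (fun t ht => ne_of_lt ht))
  refine ge_of_tendsto h1 ?_
  filter_upwards [h, self_mem_nhdsWithin] with t ht ht'
  have hlt : t < x := ht'
  rw [slope_def_field]
  have : g t - g x ≤ 0 := by linarith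
  have h2 : t - x < 0 := by linarith
  exact div_nonneg_of_nonpos this (le_of_lt h2)

lemma not_isLocalMax_of_deriv2_pos {g : ℝ → ℝ} {x : ℝ}
    (hg : ∀ᶠ t in 𝓝 x, DifferentiableAt ℝ g t)
    (h2 : 0 < deriv (deriv g) x) : ¬ IsLocalMax g x := by
  intro hmax
  have hd : DifferentiableAt ℝ (deriv g) x := differentiableAt_of_deriv_ne_zero (ne_of_gt h2)
  have hd0 : deriv g x = 0 := hmax.deriv_eq_zero
  have hslope : Filter.Tendsto (slope (deriv g) x) (𝓝[>] x) (𝓝 (deriv (deriv g) x)) :=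
    (hasDerivAt_iff_tendsto_slope.1 hd.hasDerivAt).mono_left
      (nhdsWithin_mono x (fun t ht => ne_of_gt ht))
  have hpos : ∀ᶠ t in 𝓝[>] x, 0 < deriv g t := by
    filter_upwards [hslope.eventually (eventually_gt_nhds h2), self_mem_nhdsWithin]
      with t ht ht'
    have hx : (0:ℝ) < t - x := by have : x < t := ht'; linarith
    have := mul_pos ht hx
    rw [slope_def_field, hd0, sub_zero, div_mul_cancel₀] at this
    · exact this
    · exact ne_of_gt hx
  obtain ⟨u, hu, hIoo⟩ := mem_nhdsGT_iff_exists_Ioo_subset.1 hpos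
  obtain ⟨δ1, hδ1, h1⟩ := Metric.eventually_nhds_iff.1 hg
  obtain ⟨δ2, hδ2, h2'⟩ := Metric.eventually_nhds_iff.1 (hmax : ∀ᶠ t in 𝓝 x, g t ≤ g x)
  set b := min (x + min δ1 δ2 / 2) ((x + u) / 2) with hb
  have hub : x < u := hu
  have hxb : x < b := by
    apply lt_min
    · have : 0 < min δ1 δ2 := lt_min hδ1 hδ2
      linarith
    · linarith
  have hbu : b < u := by
    have : b ≤ (x + u) / 2 := min_le_right _ _
    linarith
  have hbd : b - x < min δ1 δ2 := by
    have : b ≤ x + min δ1 δ2 / 2 := min_le_left _ _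
    have h0 : 0 < min δ1 δ2 := lt_min hδ1 hδ2
    linarith
  have hdist : ∀ t ∈ Icc x b, dist t x < min δ1 δ2 := by
    intro t ht
    rw [Real.dist_eq, abs_of_nonneg (by linarith [ht.1])]
    linarith [ht.2]
  have hmono : StrictMonoOn g (Icc x b) := by
    apply strictMonoOn_of_deriv_pos (convex_Icc x b)
    · intro t ht
      exact (h1 (lt_of_lt_of_le (hdist t ht) (min_le_left _ _))).continuousAt.continuousWithinAt
    · intro t ht
      rw [interior_Icc] at ht
      exact hIoo ⟨ht.1, lt_trans ht.2 hbu⟩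
  have hlt : g x < g b := hmono (left_mem_Icc.2 (le_of_lt hxb)) (right_mem_Icc.2 (le_of_lt hxb)) hxb
  have hle : g b ≤ g x := h2' (lt_of_lt_of_le (hdist b (right_mem_Icc.2 (le_of_lt hxb))) (min_le_right _ _))
  linarith

lemma not_isLocalMax_of_subharmonic {v : ℝ × ℝ → ℝ} {q : ℝ × ℝ}
    (hfd : ∀ᶠ t in 𝓝 q.1, DifferentiableAt ℝ (fun s => v (s, q.2)) t)
    (hgd : ∀ᶠ t in 𝓝 q.2, DifferentiableAt ℝ (fun s => v (q.1, s)) t)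
    (hpos : 0 < deriv (deriv (fun s => v (s, q.2))) q.1
        + deriv (deriv (fun s => v (q.1, s))) q.2) :
    ¬ IsLocalMax v q := by
  intro hmax
  have htx : Filter.Tendsto (fun t : ℝ => ((t, q.2) : ℝ × ℝ)) (𝓝 q.1) (𝓝 q) :=
    (continuous_id.prodMk continuous_const).tendsto' q.1 q rfl
  have hty : Filter.Tendsto (fun t : ℝ => ((q.1, t) : ℝ × ℝ)) (𝓝 q.2) (𝓝 q) :=
    (continuous_const.prodMk continuous_id).tendsto' q.2 q rfl
  have hmx : IsLocalMax (fun s => v (s, q.2)) q.1 := htx.eventually hmax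
  have hmy : IsLocalMax (fun s => v (q.1, s)) q.2 := hty.eventually hmax
  rcases lt_or_ge 0 (deriv (deriv (fun s => v (s, q.2))) q.1) with h | h
  · exact not_isLocalMax_of_deriv2_pos hfd h hmx
  · have : 0 < deriv (deriv (fun s => v (q.1, s))) q.2 := by linarith
    exact not_isLocalMax_of_deriv2_pos hgd this hmy

lemma slice_reg {f : ℝ → ℝ} {x : ℝ} (h : ContDiffAt ℝ 2 f x) :
    (∀ᶠ t in 𝓝 x, DifferentiableAt ℝ f t) ∧ DifferentiableAt ℝ (deriv f) x := by
  obtain ⟨s, hs, hcd⟩ := h.contDiffOn (le_refl 2) (by simp)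
  obtain ⟨O, hOs, hO, hxO⟩ := _root_.mem_nhds_iff.1 hs
  have hcd' : ContDiffOn ℝ 2 f O := hcd.mono hOs
  have hdiff : DifferentiableOn ℝ f O := hcd'.differentiableOn (by norm_num)
  constructor
  · filter_upwards [hO.mem_nhds hxO] with t ht
    exact (hdiff t ht).differentiableAt (hO.mem_nhds ht)
  · have : ContDiffOn ℝ 1 (deriv f) O := hcd'.deriv_of_isOpen hO (by norm_num)
    exact ((this.differentiableOn one_ne_zero) x hxO).differentiableAt (hO.mem_nhds hxO)

example (u : ℝ×ℝ→ℝ) (q : ℝ×ℝ) : pdx (pdx u) q = deriv (deriv (fun s => u (s, q.2))) q.1 := rfl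
example (u : ℝ×ℝ→ℝ) (q : ℝ×ℝ) : pdy (pdy u) q = deriv (deriv (fun s => u (q.1, s))) q.2 := rfl

lemma S_open (ηt : ℝ → ℝ) (hηcont : Continuous ηt) :
    IsOpen {p : ℝ × ℝ | ηt p.1 < p.2 ∧ p.2 < 1} :=
  (isOpen_lt (hηcont.comp continuous_fst) continuous_snd).inter
    (isOpen_lt continuous_snd continuous_const)

lemma mem_frontier_bot (ηt : ℝ → ℝ) (hηcont : Continuous ηt) (hb1 : ∀ x, ηt x < 1) (x : ℝ) :
    (x, ηt x) ∈ frontier {p : ℝ × ℝ | ηt p.1 < p.2 ∧ p.2 < 1} := by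
  rw [frontier, (S_open ηt hηcont).interior_eq]
  constructor
  · apply mem_closure_of_tendsto (f := fun t : ℝ => ((x, ηt x + t * (1 - ηt x)) : ℝ × ℝ))
      (b := 𝓝[>] (0:ℝ))
    · have : Filter.Tendsto (fun t : ℝ => ((x, ηt x + t * (1 - ηt x)) : ℝ × ℝ)) (𝓝 0)
          (𝓝 (x, ηt x + 0 * (1 - ηt x))) := by
        exact (continuous_const.prodMk (continuous_const.add
          (continuous_id.mul continuous_const))).tendsto 0
      simpa using this.mono_left nhdsWithin_le_nhds
    · filter_upwards [Ioo_mem_nhdsGT_of_mem (Set.left_mem_Ico.2 one_pos)] with t ht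
      have h1 := hb1 x
      exact ⟨by nlinarith [ht.1, ht.2], by nlinarith [ht.1, ht.2]⟩
  · intro h
    exact absurd h.1 (lt_irrefl _)

lemma mem_frontier_top (ηt : ℝ → ℝ) (hηcont : Continuous ηt) (hb1 : ∀ x, ηt x < 1) (x : ℝ) :
    (x, (1:ℝ)) ∈ frontier {p : ℝ × ℝ | ηt p.1 < p.2 ∧ p.2 < 1} := by
  rw [frontier, (S_open ηt hηcont).interior_eq]
  constructor
  · apply mem_closure_of_tendsto (f := fun t : ℝ => ((x, 1 - t * (1 - ηt x)) : ℝ × ℝ))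
      (b := 𝓝[>] (0:ℝ))
    · have : Filter.Tendsto (fun t : ℝ => ((x, 1 - t * (1 - ηt x)) : ℝ × ℝ)) (𝓝 0)
          (𝓝 (x, 1 - 0 * (1 - ηt x))) := by
        exact (continuous_const.prodMk (continuous_const.sub
          (continuous_id.mul continuous_const))).tendsto 0
      simpa using this.mono_left nhdsWithin_le_nhds
    · filter_upwards [Ioo_mem_nhdsGT_of_mem (Set.left_mem_Ico.2 one_pos)] with t ht
      have h1 := hb1 x
      exact ⟨by nlinarith [ht.1, ht.2], by nlinarith [ht.1, ht.2]⟩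
  · intro h
    exact absurd h.2 (lt_irrefl _)

lemma S_preconnected (ηt : ℝ → ℝ) (hηcont : Continuous ηt) (hb1 : ∀ x, ηt x < 1) :
    IsPreconnected {p : ℝ × ℝ | ηt p.1 < p.2 ∧ p.2 < 1} := by
  have himg : {p : ℝ × ℝ | ηt p.1 < p.2 ∧ p.2 < 1} =
      (fun q : ℝ × ℝ => ((q.1, ηt q.1 + q.2 * (1 - ηt q.1)) : ℝ × ℝ)) ''
        (univ ×ˢ Ioo (0:ℝ) 1) := by
    ext ⟨x, y⟩
    simp only [Set.mem_image, Set.mem_setOf_eq, Set.mem_prod, Set.mem_univ, Set.mem_Ioo,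
      true_and, Prod.exists, Prod.mk.injEq]
    constructor
    · rintro ⟨h1, h2⟩
      have hpos : 0 < 1 - ηt x := by linarith [hb1 x]
      refine ⟨x, (y - ηt x) / (1 - ηt x), ⟨div_pos (by linarith) hpos,
        (div_lt_one hpos).2 (by linarith)⟩, rfl, ?_⟩
      field_simp
      ring
    · rintro ⟨x', t, ⟨ht0, ht1⟩, rfl, rfl⟩
      have hpos : 0 < 1 - ηt x' := by linarith [hb1 x']
      constructor
      · nlinarith
      · nlinarith
  rw [himg]
  exact (isPreconnected_univ.prod isPreconnected_Ioo).image _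
    (Continuous.continuousOn (by continuity))

lemma slice_x_contDiff {u : ℝ × ℝ → ℝ} {S : Set (ℝ × ℝ)} (hSo : IsOpen S)
    (hureg : ContDiffOn ℝ 2 u S) {q : ℝ × ℝ} (hq : q ∈ S) :
    ContDiffAt ℝ 2 (fun s => u (s, q.2)) q.1 := by
  have h := hureg.contDiffAt (hSo.mem_nhds hq)
  exact h.comp q.1 ((contDiff_id.prodMk contDiff_const).contDiffAt)

lemma slice_y_contDiff {u : ℝ × ℝ → ℝ} {S : Set (ℝ × ℝ)} (hSo : IsOpen S)
    (hureg : ContDiffOn ℝ 2 u S) {q : ℝ × ℝ} (hq : q ∈ S) :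
    ContDiffAt ℝ 2 (fun s => u (q.1, s)) q.2 := by
  have h := hureg.contDiffAt (hSo.mem_nhds hq)
  exact h.comp q.2 ((contDiff_const.prodMk contDiff_id).contDiffAt)

lemma not_isLocalMax_add {u : ℝ × ℝ → ℝ} {S : Set (ℝ × ℝ)} (hSo : IsOpen S)
    (hureg : ContDiffOn ℝ 2 u S)
    (huharm : ∀ p ∈ S, pdx (pdx u) p + pdy (pdy u) p = 0)
    {q : ℝ × ℝ} (hq : q ∈ S)
    {w : ℝ × ℝ → ℝ} {w1 w2 : ℝ → ℝ} {c1 c2 : ℝ}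
    (hw1 : ∀ t, HasDerivAt (fun s => w (s, q.2)) (w1 t) t)
    (hw1' : HasDerivAt w1 c1 q.1)
    (hw2 : ∀ t, HasDerivAt (fun s => w (q.1, s)) (w2 t) t)
    (hw2' : HasDerivAt w2 c2 q.2)
    (hc : 0 < c1 + c2) :
    ¬ IsLocalMax (fun p => u p + w p) q := by
  obtain ⟨hfd, hfd'⟩ := slice_reg (slice_x_contDiff hSo hureg hq)
  obtain ⟨hgd, hgd'⟩ := slice_reg (slice_y_contDiff hSo hureg hq)
  have hvx : ∀ᶠ t in 𝓝 q.1, DifferentiableAt ℝ (fun s => u (s, q.2) + w (s, q.2)) t := by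
    filter_upwards [hfd] with t ht
    exact ht.add (hw1 t).differentiableAt
  have hvy : ∀ᶠ t in 𝓝 q.2, DifferentiableAt ℝ (fun s => u (q.1, s) + w (q.1, s)) t := by
    filter_upwards [hgd] with t ht
    exact ht.add (hw2 t).differentiableAt
  have hdx : deriv (fun s => u (s, q.2) + w (s, q.2)) =ᶠ[𝓝 q.1]
      (fun t => deriv (fun s => u (s, q.2)) t + w1 t) := by
    filter_upwards [hfd] with t ht
    rw [deriv_fun_add ht (hw1 t).differentiableAt, (hw1 t).deriv]
  have hdy : deriv (fun s => u (q.1, s) + w (q.1, s)) =ᶠ[𝓝 q.2]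
      (fun t => deriv (fun s => u (q.1, s)) t + w2 t) := by
    filter_upwards [hgd] with t ht
    rw [deriv_fun_add ht (hw2 t).differentiableAt, (hw2 t).deriv]
  have hdx2 : deriv (deriv (fun s => u (s, q.2) + w (s, q.2))) q.1
      = deriv (deriv (fun s => u (s, q.2))) q.1 + c1 := by
    rw [hdx.deriv_eq, deriv_fun_add hfd' hw1'.differentiableAt, hw1'.deriv]
  have hdy2 : deriv (deriv (fun s => u (q.1, s) + w (q.1, s))) q.2
      = deriv (deriv (fun s => u (q.1, s))) q.2 + c2 := by
    rw [hdy.deriv_eq, deriv_fun_add hgd' hw2'.differentiableAt, hw2'.deriv]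
  have hharm := huharm q hq
  have hpx : pdx (pdx u) q = deriv (deriv (fun s => u (s, q.2))) q.1 := rfl
  have hpy : pdy (pdy u) q = deriv (deriv (fun s => u (q.1, s))) q.2 := rfl
  refine not_isLocalMax_of_subharmonic hvx hvy ?_
  show (0:ℝ) < deriv (deriv (fun s => u (s, q.2) + w (s, q.2))) q.1
      + deriv (deriv (fun s => u (q.1, s) + w (q.1, s))) q.2
  rw [hdx2, hdy2]
  rw [hpx, hpy] at hharm
  linarith

lemma weak_max (ηt : ℝ → ℝ) (a b : ℝ)
    (hηcont : Continuous ηt) (ha : 0 < a) (hb : b < 1)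
    (hab : ∀ x : ℝ, a ≤ ηt x ∧ ηt x ≤ b)
    (u : ℝ × ℝ → ℝ)
    (hucont : ContinuousOn u {p : ℝ × ℝ | ηt p.1 ≤ p.2 ∧ p.2 ≤ 1})
    (hureg : ContDiffOn ℝ 2 u {p : ℝ × ℝ | ηt p.1 < p.2 ∧ p.2 < 1})
    (huharm : ∀ p ∈ {p : ℝ × ℝ | ηt p.1 < p.2 ∧ p.2 < 1},
      pdx (pdx u) p + pdy (pdy u) p = 0)
    (hubc : ∀ p ∈ frontier {p : ℝ × ℝ | ηt p.1 < p.2 ∧ p.2 < 1}, u p ≤ 0)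
    (hudecay : ∀ δ > (0 : ℝ), ∃ X : ℝ, ∀ x : ℝ, X ≤ |x| →
      ∀ Y : ℝ, ηt x ≤ Y → Y ≤ 1 → |u (x, Y)| ≤ δ) :
    ∀ p ∈ {p : ℝ × ℝ | ηt p.1 < p.2 ∧ p.2 < 1}, u p ≤ 0 := by
  have hb1 : ∀ x, ηt x < 1 := fun x => lt_of_le_of_lt (hab x).2 hb
  set S := {p : ℝ × ℝ | ηt p.1 < p.2 ∧ p.2 < 1} with hS
  have hSo : IsOpen S := S_open ηt hηcont
  intro p hp
  have claim : ∀ ε > (0:ℝ), u p ≤ ε := by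
    intro ε hε
    set ε2 := ε / 2 with hε2
    obtain ⟨X, hX⟩ := hudecay ε2 (by rw [hε2]; linarith)
    set R := max X |p.1| with hR
    set K := {q : ℝ × ℝ | |q.1| ≤ R ∧ ηt q.1 ≤ q.2 ∧ q.2 ≤ 1} with hKdef
    have hKclosed : IsClosed K := by
      have : K = ({q : ℝ × ℝ | -R ≤ q.1} ∩ {q : ℝ × ℝ | q.1 ≤ R}) ∩
          ({q : ℝ × ℝ | ηt q.1 ≤ q.2} ∩ {q : ℝ × ℝ | q.2 ≤ 1}) := by
        rw [hKdef]
        ext q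
        constructor
        · rintro ⟨h1, h2, h3⟩
          rw [abs_le] at h1
          exact ⟨⟨h1.1, h1.2⟩, h2, h3⟩
        · rintro ⟨⟨h1, h2⟩, h3, h4⟩
          exact ⟨abs_le.2 ⟨h1, h2⟩, h3, h4⟩
      rw [this]
      exact (IsClosed.inter (isClosed_le continuous_const continuous_fst)
          (isClosed_le continuous_fst continuous_const)).inter
        (IsClosed.inter (isClosed_le (hηcont.comp continuous_fst) continuous_snd)
          (isClosed_le continuous_snd continuous_const))
    have hKsub : K ⊆ Icc ((-R, 0) : ℝ × ℝ) ((R, 1) : ℝ × ℝ) := by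
      rintro q ⟨h1, h2, h3⟩
      rw [abs_le] at h1
      have h4 := (hab q.1).1
      simp only [Set.mem_Icc, Prod.le_def]
      refine ⟨⟨h1.1, by linarith⟩, h1.2, h3⟩
    have hK : IsCompact K := isCompact_Icc.of_isClosed_subset hKclosed hKsub
    set v := fun q : ℝ × ℝ => u q + ε2 * q.2 ^ 2 with hv
    have hKC : K ⊆ {p : ℝ × ℝ | ηt p.1 ≤ p.2 ∧ p.2 ≤ 1} := fun q hq => ⟨hq.2.1, hq.2.2⟩
    have hvcont : ContinuousOn v K :=
      (hucont.mono hKC).add (Continuous.continuousOn (by continuity))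
    have hpK : p ∈ K := ⟨le_max_right X |p.1|, le_of_lt hp.1, le_of_lt hp.2⟩
    obtain ⟨m, hmK, hmax⟩ := hK.exists_isMaxOn ⟨p, hpK⟩ hvcont
    have hvm : v m ≤ ε2 + ε2 := by
      by_cases hint : ηt m.1 < m.2 ∧ m.2 < 1 ∧ |m.1| < R
      · exfalso
        have hmS : m ∈ S := ⟨hint.1, hint.2.1⟩
        have hOopen : IsOpen (S ∩ {q : ℝ × ℝ | |q.1| < R}) :=
          hSo.inter (isOpen_lt (continuous_fst.abs) continuous_const)
        have hOK : (S ∩ {q : ℝ × ℝ | |q.1| < R}) ⊆ K := by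
          rintro q ⟨hq1, hq2⟩
          exact ⟨le_of_lt hq2, le_of_lt hq1.1, le_of_lt hq1.2⟩
        have hlm : IsLocalMax v m :=
          hmax.isLocalMax (Filter.mem_of_superset
            (hOopen.mem_nhds ⟨hmS, hint.2.2⟩) hOK)
        refine not_isLocalMax_add hSo hureg huharm hmS
          (w := fun q : ℝ × ℝ => ε2 * q.2 ^ 2)
          (w1 := fun _ => 0) (w2 := fun t => ε2 * (2 * t))
          (c1 := 0) (c2 := ε2 * 2) ?_ ?_ ?_ ?_ ?_ hlm
        · intro t
          show HasDerivAt (fun _ : ℝ => ε2 * m.2 ^ 2) 0 t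
          exact hasDerivAt_const _ _
        · exact hasDerivAt_const _ _
        · intro t
          have := (hasDerivAt_pow 2 t).const_mul ε2
          simpa [pow_one] using this
        · have := ((hasDerivAt_id m.2).const_mul (2:ℝ)).const_mul ε2
          simpa using this
        · have : 0 < ε2 := by rw [hε2]; linarith
          linarith
      · have hε'0 : (0:ℝ) < ε2 := by rw [hε2]; linarith
        have hm2 : ε2 * m.2 ^ 2 ≤ ε2 := by
          have h1 : m.2 ≤ 1 := hmK.2.2
          have h2 : 0 ≤ m.2 := le_trans (le_of_lt ha) (le_trans (hab m.1).1 hmK.2.1)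
          have hsq : m.2 ^ 2 ≤ 1 := by nlinarith
          have := mul_le_mul_of_nonneg_left hsq hε'0.le
          linarith
        by_cases h1 : ηt m.1 < m.2
        · by_cases h2 : m.2 < 1
          · have h3 : R ≤ |m.1| := not_lt.1 (fun h => hint ⟨h1, h2, h⟩)
            have hXm : X ≤ |m.1| := le_trans (le_max_left _ _) h3
            have := hX m.1 hXm m.2 hmK.2.1 hmK.2.2
            have hum : u m ≤ ε2 := le_trans (le_abs_self _) this
            simp only [hv]
            linarith
          · have hm2eq : m.2 = 1 := le_antisymm hmK.2.2 (not_lt.1 h2)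
            have hmeq : m = (m.1, (1:ℝ)) := Prod.ext rfl hm2eq
            have hum : u m ≤ 0 := by
              rw [hmeq]
              exact hubc _ (mem_frontier_top ηt hηcont hb1 m.1)
            simp only [hv]
            linarith
        · have hm2eq : m.2 = ηt m.1 := le_antisymm (not_lt.1 h1) hmK.2.1
          have hmeq : m = (m.1, ηt m.1) := Prod.ext rfl hm2eq
          have hum : u m ≤ 0 := by
            rw [hmeq]
            exact hubc _ (mem_frontier_bot ηt hηcont hb1 m.1)
          simp only [hv]
          linarith
    have hvp : v p ≤ v m := hmax hpK
    have : (0:ℝ) ≤ ε2 * p.2 ^ 2 := by positivity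
    have : u p ≤ v p := by simp only [hv]; linarith
    calc u p ≤ v m := le_trans this hvp
    _ ≤ ε2 + ε2 := hvm
    _ = ε := by rw [hε2]; ring
  by_contra hcon
  push_neg at hcon
  have := claim (u p / 2) (by linarith)
  linarith

lemma gaussX (α q1 c : ℝ) (t : ℝ) :
    HasDerivAt (fun s : ℝ => Real.exp (-α * ((s - q1) ^ 2 + c)))
      (Real.exp (-α * ((t - q1) ^ 2 + c)) * (-α * (2 * (t - q1)))) t := by
  have h1 : HasDerivAt (fun s : ℝ => -α * ((s - q1) ^ 2 + c)) (-α * (2 * (t - q1))) t := by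
    have h0 : HasDerivAt (fun s : ℝ => (s - q1) ^ 2 + c) (2 * (t - q1)) t := by
      have := (((hasDerivAt_id t).sub_const q1).pow 2).add_const c
      simpa using this
    simpa using h0.const_mul (-α)
  exact h1.exp

lemma gaussX2 (α q1 c : ℝ) (t : ℝ) :
    HasDerivAt (fun s : ℝ => Real.exp (-α * ((s - q1) ^ 2 + c)) * (-α * (2 * (s - q1))))
      (Real.exp (-α * ((t - q1) ^ 2 + c)) * (-α * (2 * (t - q1))) * (-α * (2 * (t - q1)))
        + Real.exp (-α * ((t - q1) ^ 2 + c)) * (-α * 2)) t := by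
  have h2 : HasDerivAt (fun s : ℝ => -α * (2 * (s - q1))) (-α * 2) t := by
    have := (((hasDerivAt_id t).sub_const q1).const_mul (2:ℝ)).const_mul (-α)
    simpa using this
  exact (gaussX α q1 c t).mul h2

lemma gaussY (α q2 c : ℝ) (t : ℝ) :
    HasDerivAt (fun s : ℝ => Real.exp (-α * (c + (s - q2) ^ 2)))
      (Real.exp (-α * (c + (t - q2) ^ 2)) * (-α * (2 * (t - q2)))) t := by
  have h1 : HasDerivAt (fun s : ℝ => -α * (c + (s - q2) ^ 2)) (-α * (2 * (t - q2))) t := by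
    have h0 : HasDerivAt (fun s : ℝ => c + (s - q2) ^ 2) (2 * (t - q2)) t := by
      have := (((hasDerivAt_id t).sub_const q2).pow 2).const_add c
      simpa using this
    simpa using h0.const_mul (-α)
  exact h1.exp

lemma gaussY2 (α q2 c : ℝ) (t : ℝ) :
    HasDerivAt (fun s : ℝ => Real.exp (-α * (c + (s - q2) ^ 2)) * (-α * (2 * (s - q2))))
      (Real.exp (-α * (c + (t - q2) ^ 2)) * (-α * (2 * (t - q2))) * (-α * (2 * (t - q2)))
        + Real.exp (-α * (c + (t - q2) ^ 2)) * (-α * 2)) t := by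
  have h2 : HasDerivAt (fun s : ℝ => -α * (2 * (s - q2))) (-α * 2) t := by
    have := (((hasDerivAt_id t).sub_const q2).const_mul (2:ℝ)).const_mul (-α)
    simpa using this
  exact (gaussY α q2 c t).mul h2

lemma sup_sq_le (q q' : ℝ × ℝ) : (dist q q') ^ 2 ≤ (q.1 - q'.1) ^ 2 + (q.2 - q'.2) ^ 2 := by
  rw [Prod.dist_eq]
  rcases max_cases (dist q.1 q'.1) (dist q.2 q'.2) with ⟨h1, _⟩ | ⟨h1, _⟩ <;>
    rw [h1, Real.dist_eq] <;> nlinarith [sq_abs (q.1 - q'.1), sq_abs (q.2 - q'.2),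
      sq_nonneg (q.1 - q'.1), sq_nonneg (q.2 - q'.2)]

lemma le_sup_sq (q q' : ℝ × ℝ) :
    (q.1 - q'.1) ^ 2 + (q.2 - q'.2) ^ 2 ≤ 2 * (dist q q') ^ 2 := by
  have h1 : |q.1 - q'.1| ≤ dist q q' := by
    rw [Prod.dist_eq, ← Real.dist_eq]; exact le_max_left _ _
  have h2 : |q.2 - q'.2| ≤ dist q q' := by
    rw [Prod.dist_eq, ← Real.dist_eq]; exact le_max_right _ _
  nlinarith [sq_abs (q.1 - q'.1), sq_abs (q.2 - q'.2), abs_nonneg (q.1 - q'.1),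
    abs_nonneg (q.2 - q'.2), dist_nonneg (x := q) (y := q')]

set_option maxHeartbeats 1000000 in
lemma hopf_no_touch {u : ℝ × ℝ → ℝ} {S : Set (ℝ × ℝ)} (hSo : IsOpen S)
    (hureg : ContDiffOn ℝ 2 u S)
    (huharm : ∀ p ∈ S, pdx (pdx u) p + pdy (pdy u) p = 0)
    (hle : ∀ p ∈ S, u p ≤ 0)
    {z : ℝ × ℝ} (hz : z ∈ S) (hz0 : u z = 0)
    (hcl : z ∈ closure (S ∩ u ⁻¹' (Set.Iio 0))) : False := by
  have hucont : ContinuousOn u S := hureg.continuousOn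
  obtain ⟨r₀, hr₀, hball⟩ := Metric.isOpen_iff.1 hSo z hz
  obtain ⟨p, hpN, hzp⟩ := Metric.mem_closure_iff.1 hcl (r₀ / 8) (by linarith)
  have hpS : p ∈ S := hpN.1
  have hpneg : u p < 0 := hpN.2
  have hcb2S : closedBall z (r₀ / 2) ⊆ S := fun q hq =>
    hball (lt_of_le_of_lt (mem_closedBall.1 hq) (by linarith))
  set Z' := closedBall z (r₀ / 2) ∩ u ⁻¹' ({0} : Set ℝ) with hZ'
  have hZ'closed : IsClosed Z' := (hucont.mono hcb2S).preimage_isClosed_of_isClosed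
      Metric.isClosed_closedBall isClosed_singleton
  have hZ'cpt : IsCompact Z' :=
    (isCompact_closedBall z (r₀/2)).of_isClosed_subset hZ'closed Set.inter_subset_left
  have hzZ' : z ∈ Z' := ⟨mem_closedBall_self (by linarith), hz0⟩
  have hfcont : Continuous (fun q : ℝ × ℝ => (q.1 - p.1) ^ 2 + (q.2 - p.2) ^ 2) :=
    ((continuous_fst.sub continuous_const).pow 2).add
      ((continuous_snd.sub continuous_const).pow 2)
  obtain ⟨zs, hzsZ', hzsmin⟩ := hZ'cpt.exists_isMinOn ⟨z, hzZ'⟩ hfcont.continuousOn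
  set ρ := (zs.1 - p.1) ^ 2 + (zs.2 - p.2) ^ 2 with hρ
  have hρub : ρ ≤ r₀ ^ 2 / 32 := by
    have h1 : ρ ≤ (z.1 - p.1) ^ 2 + (z.2 - p.2) ^ 2 := hzsmin hzZ'
    have h2 : (z.1 - p.1) ^ 2 + (z.2 - p.2) ^ 2 ≤ 2 * (dist z p) ^ 2 := le_sup_sq z p
    have h3 : dist z p < r₀ / 8 := hzp
    nlinarith [dist_nonneg (x := z) (y := p)]
  have hρpos : 0 < ρ := by
    have h0 : 0 ≤ ρ := by positivity
    rcases h0.lt_or_eq with h | h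
    · exact h
    · exfalso
      have h1 : zs.1 = p.1 := by nlinarith [sq_nonneg (zs.1 - p.1), sq_nonneg (zs.2 - p.2)]
      have h2 : zs.2 = p.2 := by nlinarith [sq_nonneg (zs.1 - p.1), sq_nonneg (zs.2 - p.2)]
      have : zs = p := Prod.ext h1 h2
      rw [this] at hzsZ'
      exact absurd hzsZ'.2 (ne_of_lt hpneg)
  have hcont1 : ∀ q : ℝ × ℝ, (q.1 - p.1) ^ 2 + (q.2 - p.2) ^ 2 ≤ ρ →
      q ∈ closedBall z (r₀ / 2) := by
    intro q hq
    have h1 : (dist q p) ^ 2 ≤ ρ := le_trans (sup_sq_le q p) hq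
    have h3 : dist q p ≤ r₀ / 4 := by
      nlinarith [dist_nonneg (x := q) (y := p)]
    rw [mem_closedBall]
    calc dist q z ≤ dist q p + dist p z := dist_triangle q p z
    _ ≤ r₀ / 4 + r₀ / 8 := by
        have : dist p z < r₀ / 8 := by rw [dist_comm]; exact hzp
        linarith
    _ ≤ r₀ / 2 := by linarith
  have hcontS : ∀ q : ℝ × ℝ, (q.1 - p.1) ^ 2 + (q.2 - p.2) ^ 2 ≤ ρ → q ∈ S :=
    fun q hq => hcb2S (hcont1 q hq)
  have hneg : ∀ q : ℝ × ℝ, (q.1 - p.1) ^ 2 + (q.2 - p.2) ^ 2 < ρ → u q < 0 := by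
    intro q hq
    have hqS := hcontS q hq.le
    rcases (hle q hqS).lt_or_eq with h | h
    · exact h
    · exfalso
      have hq' : q ∈ Z' := ⟨hcont1 q hq.le, h⟩
      exact absurd (hzsmin hq') (not_le.2 hq)
  set α := 8 / ρ with hα
  have hαpos : 0 < α := by rw [hα]; positivity
  set C := Real.exp (-α * ρ) with hCdef
  have hCpos : 0 < C := Real.exp_pos _
  -- inner sphere
  have hmid : ((p + (1/2 : ℝ) • (zs - p)).1 - p.1) ^ 2
      + ((p + (1/2 : ℝ) • (zs - p)).2 - p.2) ^ 2 = ρ / 4 := by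
    simp only [Prod.fst_add, Prod.snd_add, Prod.smul_fst, Prod.smul_snd, Prod.fst_sub,
      Prod.snd_sub, smul_eq_mul, hρ]
    ring
  set Sp := {q : ℝ × ℝ | (q.1 - p.1) ^ 2 + (q.2 - p.2) ^ 2 = ρ / 4} with hSpdef
  have hSpclosed : IsClosed Sp := isClosed_eq hfcont continuous_const
  have hSpsub : Sp ⊆ closedBall p (Real.sqrt ρ) := by
    intro q hq
    rw [mem_closedBall]
    apply Real.le_sqrt_of_sq_le
    have : (q.1 - p.1) ^ 2 + (q.2 - p.2) ^ 2 = ρ / 4 := hq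
    nlinarith [sup_sq_le q p]
  have hSpcpt : IsCompact Sp := (isCompact_closedBall _ _).of_isClosed_subset hSpclosed hSpsub
  have hSpS : Sp ⊆ S := by
    intro q hq
    exact hcontS q (by have : (q.1 - p.1) ^ 2 + (q.2 - p.2) ^ 2 = ρ / 4 := hq; linarith)
  obtain ⟨ms, hms, hmsmax⟩ := hSpcpt.exists_isMaxOn ⟨_, hmid⟩ (hucont.mono hSpS)
  set m := -u ms with hm
  have hmpos : 0 < m := by
    have h1 : (ms.1 - p.1) ^ 2 + (ms.2 - p.2) ^ 2 = ρ / 4 := hms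
    have := hneg ms (by linarith)
    rw [hm]; linarith
  set w := fun q : ℝ × ℝ => Real.exp (-α * ((q.1 - p.1) ^ 2 + (q.2 - p.2) ^ 2)) - C with hwdef
  set v := fun q : ℝ × ℝ => u q + m * w q with hv
  set A := {q : ℝ × ℝ | ρ / 4 ≤ (q.1 - p.1) ^ 2 + (q.2 - p.2) ^ 2
      ∧ (q.1 - p.1) ^ 2 + (q.2 - p.2) ^ 2 ≤ ρ} with hAdef
  have hAS : A ⊆ S := fun q hq => hcontS q hq.2
  have hAclosed : IsClosed A :=
    (isClosed_le continuous_const hfcont).inter (isClosed_le hfcont continuous_const)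
  have hAsub : A ⊆ closedBall p (Real.sqrt ρ) := by
    intro q hq
    rw [mem_closedBall]
    exact Real.le_sqrt_of_sq_le (le_trans (sup_sq_le q p) hq.2)
  have hAcpt : IsCompact A := (isCompact_closedBall _ _).of_isClosed_subset hAclosed hAsub
  have hzsA : zs ∈ A := ⟨by rw [← hρ]; linarith, by rw [← hρ]⟩
  have hvcont : ContinuousOn v A := by
    apply ((hucont.mono hAS).add (Continuous.continuousOn ?_))
    exact continuous_const.mul ((Real.continuous_exp.comp (continuous_const.mul hfcont)).sub continuous_const)
  obtain ⟨m', hm'A, hm'max⟩ := hAcpt.exists_isMaxOn ⟨zs, hzsA⟩ hvcont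
  have hvm' : v m' ≤ 0 := by
    by_cases hint : ρ / 4 < (m'.1 - p.1) ^ 2 + (m'.2 - p.2) ^ 2
        ∧ (m'.1 - p.1) ^ 2 + (m'.2 - p.2) ^ 2 < ρ
    · exfalso
      have hm'S : m' ∈ S := hAS hm'A
      have hU : IsOpen {q : ℝ × ℝ | ρ / 4 < (q.1 - p.1) ^ 2 + (q.2 - p.2) ^ 2
          ∧ (q.1 - p.1) ^ 2 + (q.2 - p.2) ^ 2 < ρ} :=
        (isOpen_lt continuous_const hfcont).inter (isOpen_lt hfcont continuous_const)
      have hUA : {q : ℝ × ℝ | ρ / 4 < (q.1 - p.1) ^ 2 + (q.2 - p.2) ^ 2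
          ∧ (q.1 - p.1) ^ 2 + (q.2 - p.2) ^ 2 < ρ} ⊆ A := fun q hq => ⟨hq.1.le, hq.2.le⟩
      have hlm : IsLocalMax v m' :=
        hm'max.isLocalMax (Filter.mem_of_superset (hU.mem_nhds hint) hUA)
      refine not_isLocalMax_add hSo hureg huharm hm'S
        (w := fun q : ℝ × ℝ => m * w q)
        (w1 := fun t => m * (Real.exp (-α * ((t - p.1) ^ 2 + (m'.2 - p.2) ^ 2))
          * (-α * (2 * (t - p.1)))))
        (w2 := fun t => m * (Real.exp (-α * ((m'.1 - p.1) ^ 2 + (t - p.2) ^ 2))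
          * (-α * (2 * (t - p.2)))))
        (c1 := m * (Real.exp (-α * ((m'.1 - p.1) ^ 2 + (m'.2 - p.2) ^ 2))
            * (-α * (2 * (m'.1 - p.1))) * (-α * (2 * (m'.1 - p.1)))
          + Real.exp (-α * ((m'.1 - p.1) ^ 2 + (m'.2 - p.2) ^ 2)) * (-α * 2)))
        (c2 := m * (Real.exp (-α * ((m'.1 - p.1) ^ 2 + (m'.2 - p.2) ^ 2))
            * (-α * (2 * (m'.2 - p.2))) * (-α * (2 * (m'.2 - p.2)))
          + Real.exp (-α * ((m'.1 - p.1) ^ 2 + (m'.2 - p.2) ^ 2)) * (-α * 2)))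
        ?_ ?_ ?_ ?_ ?_ hlm
      · intro t
        exact ((gaussX α p.1 ((m'.2 - p.2) ^ 2) t).sub_const C).const_mul m
      · exact (gaussX2 α p.1 ((m'.2 - p.2) ^ 2) m'.1).const_mul m
      · intro t
        exact ((gaussY α p.2 ((m'.1 - p.1) ^ 2) t).sub_const C).const_mul m
      · exact (gaussY2 α p.2 ((m'.1 - p.1) ^ 2) m'.2).const_mul m
      · have hepos : 0 < Real.exp (-α * ((m'.1 - p.1) ^ 2 + (m'.2 - p.2) ^ 2)) :=
          Real.exp_pos _
        have hE1 : ρ / 4 ≤ (m'.1 - p.1) ^ 2 + (m'.2 - p.2) ^ 2 := hint.1.le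
        have hαE : 2 ≤ α * ((m'.1 - p.1) ^ 2 + (m'.2 - p.2) ^ 2) := by
          rw [hα]
          rw [div_mul_eq_mul_div, le_div_iff₀ hρpos]
          nlinarith
        have key : ∀ e X Y : ℝ, m * (e * (-α * (2 * X)) * (-α * (2 * X)) + e * (-α * 2))
            + m * (e * (-α * (2 * Y)) * (-α * (2 * Y)) + e * (-α * 2))
            = m * e * (4 * α * (α * (X ^ 2 + Y ^ 2) - 1)) := by
          intro e X Y; ring
        rw [key]
        apply mul_pos (mul_pos hmpos hepos)
        apply mul_pos (by linarith : (0:ℝ) < 4 * α)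
        linarith
    · rcases hm'A with ⟨hlo, hhi⟩
      by_cases h1 : ρ / 4 < (m'.1 - p.1) ^ 2 + (m'.2 - p.2) ^ 2
      · have h2 : (m'.1 - p.1) ^ 2 + (m'.2 - p.2) ^ 2 = ρ := by
          rcases lt_or_eq_of_le hhi with h | h
          · exact absurd ⟨h1, h⟩ hint
          · exact h
        have hw0 : w m' = 0 := by rw [hwdef]; simp only [h2]; rw [sub_eq_zero, hCdef]
        have := hle m' (hAS ⟨hlo, hhi⟩)
        simp only [hv, hw0, mul_zero, add_zero]
        exact this
      · have h2 : (m'.1 - p.1) ^ 2 + (m'.2 - p.2) ^ 2 = ρ / 4 := le_antisymm (not_lt.1 h1) hlo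
        have hm'Sp : m' ∈ Sp := h2
        have hu1 : u m' ≤ -m := by
          have h5 : u m' ≤ u ms := hmsmax hm'Sp
          rw [hm, neg_neg]
          exact h5
        have hwle : w m' ≤ 1 := by
          rw [hwdef]
          simp only
          have h3 : Real.exp (-α * ((m'.1 - p.1) ^ 2 + (m'.2 - p.2) ^ 2)) ≤ 1 := by
            rw [Real.exp_le_one_iff]
            rw [h2]
            nlinarith
          linarith
        have hmw : m * w m' ≤ m := by
          calc m * w m' ≤ m * 1 := mul_le_mul_of_nonneg_left hwle hmpos.le
          _ = m := mul_one m
        show u m' + m * w m' ≤ 0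
        linarith
  have hvle : ∀ q ∈ A, v q ≤ 0 := fun q hq => le_trans (hm'max hq) hvm'
  -- radial segment
  set d := zs - p with hd
  set g := fun t : ℝ => u (p + t • d) + m * (Real.exp (-α * (t ^ 2 * ρ)) - C) with hg
  have hcoord : ∀ t : ℝ, ((p + t • d).1 - p.1) ^ 2 + ((p + t • d).2 - p.2) ^ 2
      = t ^ 2 * ρ := by
    intro t
    simp only [hd, Prod.fst_add, Prod.snd_add, Prod.smul_fst, Prod.smul_snd, Prod.fst_sub,
      Prod.snd_sub, smul_eq_mul, hρ]
    ring
  have hgeq : ∀ t : ℝ, g t = v (p + t • d) := by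
    intro t
    simp only [hg, hv, hwdef]
    rw [hcoord t]
  have hfA : ∀ t ∈ Icc (1/2 : ℝ) 1, (p + t • d) ∈ A := by
    intro t ht
    have h4 : (1:ℝ)/4 ≤ t ^ 2 := by nlinarith [ht.1, ht.2]
    have h5 : t ^ 2 ≤ 1 := by nlinarith [ht.1, ht.2]
    constructor
    · rw [hcoord t]
      nlinarith [mul_le_mul_of_nonneg_right h4 hρpos.le]
    · rw [hcoord t]
      nlinarith [mul_le_mul_of_nonneg_right h5 hρpos.le]
  have hgle : ∀ t ∈ Icc (1/2 : ℝ) 1, g t ≤ 0 := by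
    intro t ht
    rw [hgeq t]
    exact hvle _ (hfA t ht)
  have hone : p + (1:ℝ) • d = zs := by rw [hd]; simp
  have hg1 : g 1 = 0 := by
    simp only [hg]
    rw [hone, hzsZ'.2]
    norm_num [hCdef]
  have hzsS : zs ∈ S := hcontS zs (le_of_eq hρ.symm)
  have hloc : IsLocalMax u zs := by
    have : ∀ᶠ q in 𝓝 zs, u q ≤ u zs := by
      filter_upwards [hSo.mem_nhds hzsS] with q hq
      rw [hzsZ'.2]
      exact hle q hq
    exact this
  have hfderiv0 : fderiv ℝ u zs = 0 := hloc.fderiv_eq_zero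
  have hudiff : DifferentiableAt ℝ u zs :=
    (hureg.contDiffAt (hSo.mem_nhds hzsS)).differentiableAt (by norm_num)
  have hline : HasDerivAt (fun t : ℝ => p + t • d) d 1 := by
    have := ((hasDerivAt_id (1:ℝ)).smul_const d).const_add p
    simpa using this
  have hcomp : HasDerivAt (fun t : ℝ => u (p + t • d)) 0 1 := by
    have h1 : HasFDerivAt u (0 : ℝ × ℝ →L[ℝ] ℝ) (p + (1:ℝ) • d) := by
      rw [hone, ← hfderiv0]
      exact hudiff.hasFDerivAt
    have := h1.comp_hasDerivAt 1 hline
    simp at this; exact this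
  have hexp : HasDerivAt (fun t : ℝ => m * (Real.exp (-α * (t ^ 2 * ρ)) - C))
      (m * (Real.exp (-α * ((1:ℝ) ^ 2 * ρ)) * (-α * (2 * (1:ℝ) ^ 1 * ρ)))) 1 := by
    have h1 : HasDerivAt (fun t : ℝ => -α * (t ^ 2 * ρ)) (-α * (2 * (1:ℝ) ^ 1 * ρ)) 1 := by
      have := ((hasDerivAt_pow 2 (1:ℝ)).mul_const ρ).const_mul (-α)
      simpa using this
    exact ((h1.exp).sub_const C).const_mul m
  have hgd : HasDerivAt g
      (0 + m * (Real.exp (-α * ((1:ℝ) ^ 2 * ρ)) * (-α * (2 * (1:ℝ) ^ 1 * ρ)))) 1 :=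
    hcomp.add hexp
  have hL : 0 ≤ 0 + m * (Real.exp (-α * ((1:ℝ) ^ 2 * ρ)) * (-α * (2 * (1:ℝ) ^ 1 * ρ))) := by
    apply deriv_nonneg_of_max_left hgd
    filter_upwards [Ioo_mem_nhdsLT_of_mem (show (1:ℝ) ∈ Ioc (1/2) 1 by constructor <;> norm_num)]
      with t ht
    rw [hg1]
    exact hgle t ⟨ht.1.le, ht.2.le⟩
  have hLneg : m * (Real.exp (-α * ((1:ℝ) ^ 2 * ρ)) * (-α * (2 * (1:ℝ) ^ 1 * ρ))) < 0 := by
    have hep := Real.exp_pos (-α * ((1:ℝ) ^ 2 * ρ))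
    have hkey : m * (Real.exp (-α * ((1:ℝ) ^ 2 * ρ)) * (-α * (2 * (1:ℝ) ^ 1 * ρ)))
        = -(2 * (m * Real.exp (-α * ((1:ℝ) ^ 2 * ρ)) * (α * ρ))) := by ring
    rw [hkey]
    have := mul_pos (mul_pos hmpos hep) (mul_pos hαpos hρpos)
    linarith
  linarith

/-- A maximum principle on the unbounded strip-like domain
`D = {(x,Y) : η̃(x) < Y < 1}` with variable lower boundary: a bounded harmonic
function that is ≤ 0 on the boundary and vanishes at infinity is ≤ 0 in `D`, and
is < 0 in `D` if it is negative somewhere on the lower boundary. -/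
theorem strip_maximum_principle (ηt : ℝ → ℝ) (a b : ℝ)
    (hηcont : Continuous ηt) (ha : 0 < a) (hb : b < 1)
    (hab : ∀ x : ℝ, a ≤ ηt x ∧ ηt x ≤ b)
    (u : ℝ × ℝ → ℝ)
    (hucont : ContinuousOn u {p : ℝ × ℝ | ηt p.1 ≤ p.2 ∧ p.2 ≤ 1})
    (hubdd : ∃ M : ℝ, ∀ p ∈ {p : ℝ × ℝ | ηt p.1 ≤ p.2 ∧ p.2 ≤ 1}, |u p| ≤ M)
    (hureg : ContDiffOn ℝ 2 u {p : ℝ × ℝ | ηt p.1 < p.2 ∧ p.2 < 1})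
    (huharm : ∀ p ∈ {p : ℝ × ℝ | ηt p.1 < p.2 ∧ p.2 < 1},
      pdx (pdx u) p + pdy (pdy u) p = 0)
    (hubc : ∀ p ∈ frontier {p : ℝ × ℝ | ηt p.1 < p.2 ∧ p.2 < 1}, u p ≤ 0)
    (hudecay : ∀ δ > (0 : ℝ), ∃ X : ℝ, ∀ x : ℝ, X ≤ |x| →
      ∀ Y : ℝ, ηt x ≤ Y → Y ≤ 1 → |u (x, Y)| ≤ δ) :
    (∀ p ∈ {p : ℝ × ℝ | ηt p.1 < p.2 ∧ p.2 < 1}, u p ≤ 0) ∧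
    (∀ x₀ : ℝ, u (x₀, ηt x₀) < 0 →
      ∀ p ∈ {p : ℝ × ℝ | ηt p.1 < p.2 ∧ p.2 < 1}, u p < 0) := by
  have hb1 : ∀ x, ηt x < 1 := fun x => lt_of_le_of_lt (hab x).2 hb
  have hSo : IsOpen {p : ℝ × ℝ | ηt p.1 < p.2 ∧ p.2 < 1} := S_open ηt hηcont
  have part1 : ∀ p ∈ {p : ℝ × ℝ | ηt p.1 < p.2 ∧ p.2 < 1}, u p ≤ 0 :=
    weak_max ηt a b hηcont ha hb hab u hucont hureg huharm hubc hudecay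
  refine ⟨part1, ?_⟩
  intro x₀ hx₀ p hp
  rcases (part1 p hp).lt_or_eq with h | hp0
  · exact h
  exfalso
  have hq0 : ∃ q : ℝ × ℝ, q ∈ {p : ℝ × ℝ | ηt p.1 < p.2 ∧ p.2 < 1} ∧ u q < 0 := by
    have hcw : ContinuousWithinAt u {p : ℝ × ℝ | ηt p.1 ≤ p.2 ∧ p.2 ≤ 1} (x₀, ηt x₀) :=
      hucont _ ⟨le_refl _, (hb1 x₀).le⟩
    have hmem : Ioo (0:ℝ) (1 - ηt x₀) ∈ 𝓝[>] (0:ℝ) :=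
      Ioo_mem_nhdsGT_of_mem (Set.left_mem_Ico.2 (by linarith [hb1 x₀]))
    have hφ : Filter.Tendsto (fun t : ℝ => ((x₀, ηt x₀ + t) : ℝ × ℝ)) (𝓝[>] (0:ℝ))
        (𝓝[{p : ℝ × ℝ | ηt p.1 ≤ p.2 ∧ p.2 ≤ 1}] (x₀, ηt x₀)) := by
      rw [tendsto_nhdsWithin_iff]
      constructor
      · have h0 : Filter.Tendsto (fun t : ℝ => ((x₀, ηt x₀ + t) : ℝ × ℝ)) (𝓝 0)
            (𝓝 (x₀, ηt x₀ + 0)) :=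
          (continuous_const.prodMk (continuous_const.add continuous_id)).tendsto 0
        simpa using h0.mono_left nhdsWithin_le_nhds
      · filter_upwards [hmem] with t ht
        exact ⟨show ηt x₀ ≤ ηt x₀ + t by linarith [ht.1],
          show ηt x₀ + t ≤ 1 by linarith [ht.2]⟩
    have hev1 : ∀ᶠ t in 𝓝[>] (0:ℝ), u (x₀, ηt x₀ + t) < 0 :=
      (hcw.tendsto.comp hφ).eventually (gt_mem_nhds hx₀)
    obtain ⟨t, ht1, ht2⟩ := (hev1.and (Filter.eventually_mem_set.2 hmem)).exists
    exact ⟨(x₀, ηt x₀ + t),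
      ⟨show ηt x₀ < ηt x₀ + t by linarith [ht2.1], show ηt x₀ + t < 1 by linarith [ht2.2]⟩,
      ht1⟩
  obtain ⟨q₀, hq₀S, hq₀neg⟩ := hq0
  set N := {p : ℝ × ℝ | ηt p.1 < p.2 ∧ p.2 < 1} ∩ u ⁻¹' (Set.Iio 0) with hN
  have hNopen : IsOpen N := ContinuousOn.isOpen_inter_preimage
    (hucont.mono (fun q hq => ⟨hq.1.le, hq.2.le⟩)) hSo isOpen_Iio
  have hhopf : ∀ z ∈ {p : ℝ × ℝ | ηt p.1 < p.2 ∧ p.2 < 1}, u z = 0 → z ∉ closure N :=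
    fun z hzS hz0 hmem => hopf_no_touch hSo hureg huharm part1 hzS hz0 hmem
  have hpc := S_preconnected ηt hηcont hb1
  have hcover : {p : ℝ × ℝ | ηt p.1 < p.2 ∧ p.2 < 1} ⊆ N ∪ (closure N)ᶜ := by
    intro q hq
    rcases (part1 q hq).lt_or_eq with h | h
    · exact Or.inl ⟨hq, h⟩
    · exact Or.inr (hhopf q hq h)
  have h1 : ({p : ℝ × ℝ | ηt p.1 < p.2 ∧ p.2 < 1} ∩ N).Nonempty :=
    ⟨q₀, hq₀S, hq₀S, hq₀neg⟩
  have h2 : ({p : ℝ × ℝ | ηt p.1 < p.2 ∧ p.2 < 1} ∩ (closure N)ᶜ).Nonempty :=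
    ⟨p, hp, hhopf p hp hp0⟩
  obtain ⟨x, -, hxN, hxc⟩ :=
    hpc N (closure N)ᶜ hNopen isClosed_closure.isOpen_compl hcover h1 h2
  exact hxc (subset_closure hxN)
end
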